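/- arXiv:2010.08988 — 4 statements merged into one kernel-verified Lean document; each statement's English description precedes it below -/
import Mathlib

section
/- Every GB-minor of a non-even oriented matroid is non-even. -/
open Relation

/-! ## Finite directed multigraphs -/

/-- A finite directed multigraph: finite vertex and edge types together with
tail and head maps (loops and parallel/anti-parallel edges are allowed). -/
structure MultiDigraph : Type 1 where
  V : Type
  E : Type
  [fv : Fintype V]
  [fe : Fintype E]
  [dv : DecidableEq V]
  [de : DecidableEq E]
  tail : E → V
  head : E → V

attribute [instance] MultiDigraph.fv MultiDigraph.fe MultiDigraph.dv MultiDigraph.de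

namespace MultiDigraph

variable (D : MultiDigraph)

/-- The set of edges crossing the partition `(X, Xᶜ)` of the vertex set. -/
def cutAt (X : Set D.V) : Set D.E :=
  {e | (D.tail e ∈ X ∧ D.head e ∉ X) ∨ (D.tail e ∉ X ∧ D.head e ∈ X)}

/-- A cut: a nonempty set of edges of the form `cutAt X`. -/
def IsCut (S : Set D.E) : Prop := S.Nonempty ∧ ∃ X : Set D.V, S = D.cutAt X

/-- A bond: a cut containing no other cut properly. -/
def IsBond (S : Set D.E) : Prop := D.IsCut S ∧ ∀ S', D.IsCut S' → S' ⊆ S → S' = S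

/-- A directed cut: a nonempty cut `cutAt X` such that no edge enters `X`. -/
def IsDirectedCut (S : Set D.E) : Prop :=
  S.Nonempty ∧ ∃ X : Set D.V, S = D.cutAt X ∧ ∀ e : D.E, ¬(D.tail e ∉ X ∧ D.head e ∈ X)

/-- A directed bond: a bond which is a directed cut. -/
def IsDirectedBond (S : Set D.E) : Prop := D.IsBond S ∧ D.IsDirectedCut S

/-- An odd dijoin: an edge set meeting every directed bond an odd number of times. -/
def IsOddDijoin (J : Set D.E) : Prop := ∀ S : Set D.E, D.IsDirectedBond S → Odd (J ∩ S).ncard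

def HasOddDijoin : Prop := ∃ J : Set D.E, D.IsOddDijoin J

/-- One-step relation used for weak connectivity of the subgraph spanned by `A`:
`x` and `y` are joined by an edge of `A`. -/
def touchRel (A : Set D.E) : D.V → D.V → Prop :=
  fun x y => ∃ e ∈ A, D.tail e = x ∧ D.head e = y

/-- Contraction `D/A`: delete the edges of `A` and identify each weak component of `D[A]`. -/
noncomputable def contract (A : Set D.E) : MultiDigraph :=
  letI s := EqvGen.setoid (D.touchRel A)
  { V := Quotient s
    E := {e : D.E // e ∉ A}
    fv := Fintype.ofFinite _
    fe := Fintype.ofFinite _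
    dv := Classical.decEq _
    de := Classical.decEq _
    tail := fun e => Quotient.mk s (D.tail e.1)
    head := fun e => Quotient.mk s (D.head e.1) }

/-- A step of a directed walk. -/
def dstep : D.V → D.V → Prop := fun a b => ∃ e : D.E, D.tail e = a ∧ D.head e = b

/-- A step of a directed walk avoiding a fixed edge `e₀`. -/
def dstepAvoiding (e₀ : D.E) : D.V → D.V → Prop :=
  fun a b => ∃ e : D.E, e ≠ e₀ ∧ D.tail e = a ∧ D.head e = b

/-- An edge is deletable if it is not a loop and there is a directed path from its tail
to its head not using it. -/
def Deletable (e : D.E) : Prop :=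
  D.tail e ≠ D.head e ∧ ReflTransGen (D.dstepAvoiding e) (D.tail e) (D.head e)

/-- Deleting one edge. -/
noncomputable def deleteEdge (e : D.E) : MultiDigraph where
  V := D.V
  E := {f : D.E // f ≠ e}
  fv := D.fv
  fe := Fintype.ofFinite _
  dv := D.dv
  de := Classical.decEq _
  tail := fun f => D.tail f.1
  head := fun f => D.head f.1

/-- An isolated vertex. -/
def Isolated (v : D.V) : Prop := ∀ e : D.E, D.tail e ≠ v ∧ D.head e ≠ v

/-- Deleting an isolated vertex. -/
noncomputable def deleteVertex (v : D.V) (h : D.Isolated v) : MultiDigraph where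
  V := {u : D.V // u ≠ v}
  E := D.E
  fv := Fintype.ofFinite _
  fe := D.fe
  dv := Classical.decEq _
  de := D.de
  tail := fun e => ⟨D.tail e, (h e).1⟩
  head := fun e => ⟨D.head e, (h e).2⟩

/-- A digraph is acyclic if it has no directed cycle. -/
def Acyclic : Prop := ∀ a b : D.V, D.dstep a b → ¬ ReflTransGen D.dstep b a

/-- A step of an undirected walk. -/
def ustep : D.V → D.V → Prop :=
  fun a b => ∃ e : D.E, (D.tail e = a ∧ D.head e = b) ∨ (D.tail e = b ∧ D.head e = a)

/-- Weak connectivity. -/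
def WeaklyConnected : Prop := ∀ a b : D.V, ReflTransGen D.ustep a b

/-- A step of an undirected walk avoiding the vertex `v`. -/
def ustepAvoiding (v : D.V) : D.V → D.V → Prop :=
  fun a b => a ≠ v ∧ b ≠ v ∧ D.ustep a b

/-- The underlying multigraph is 2-vertex-connected. -/
def TwoConnected : Prop :=
  3 ≤ Fintype.card D.V ∧ D.WeaklyConnected ∧
    ∀ v a b : D.V, a ≠ v → b ≠ v → ReflTransGen (D.ustepAvoiding v) a b

/-- `D` is an oriented graph: no loops and no pair of parallel or anti-parallel edges. -/
def Oriented : Prop :=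
  (∀ e : D.E, D.tail e ≠ D.head e) ∧
    ∀ e f : D.E, e ≠ f → ({D.tail e, D.head e} : Set D.V) ≠ {D.tail f, D.head f}

/-- `D` is transitively reduced: no edge of `D` is deletable. -/
def TransitivelyReduced : Prop := ∀ e : D.E, ¬ D.Deletable e

end MultiDigraph

/-! ## Digraph isomorphism -/

/-- An isomorphism of directed multigraphs. -/
structure DigraphIso (D₁ D₂ : MultiDigraph) where
  vmap : D₁.V ≃ D₂.V
  emap : D₁.E ≃ D₂.E
  tail_eq : ∀ e, D₂.tail (emap e) = vmap (D₁.tail e)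
  head_eq : ∀ e, D₂.head (emap e) = vmap (D₁.head e)

def IsIsomorphic (D₁ D₂ : MultiDigraph) : Prop := Nonempty (DigraphIso D₁ D₂)

/-! ## Cut minors -/

/-- A single cut-minor step: contraction of an edge, deletion of a deletable edge, or
deletion of an isolated vertex. -/
inductive CutMinorStep : MultiDigraph → MultiDigraph → Prop
  | contractEdge (D : MultiDigraph) (e : D.E) : CutMinorStep (D.contract {e}) D
  | delEdge (D : MultiDigraph) (e : D.E) (h : D.Deletable e) : CutMinorStep (D.deleteEdge e) D
  | delVertex (D : MultiDigraph) (v : D.V) (h : D.Isolated v) :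
      CutMinorStep (D.deleteVertex v h) D

/-- `D₁` is a cut minor of `D₂`. -/
def IsCutMinor (D₁ D₂ : MultiDigraph) : Prop := ReflTransGen CutMinorStep D₁ D₂

/-- A proper cut minor: a cut minor which is not isomorphic to the digraph itself. -/
def IsProperCutMinor (D₁ D₂ : MultiDigraph) : Prop :=
  IsCutMinor D₁ D₂ ∧ ¬ IsIsomorphic D₁ D₂

/-- A minimal obstruction: a digraph without an odd dijoin all of whose proper cut minors
have an odd dijoin. -/
def MinimalObstruction (D : MultiDigraph) : Prop :=
  ¬ D.HasOddDijoin ∧ ∀ D' : MultiDigraph, IsProperCutMinor D' D → D'.HasOddDijoin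

/-! ## Cycles and forests in the underlying multigraph -/

namespace MultiDigraph

variable (D : MultiDigraph)

/-- `X : D.E → SignType` is the signed incidence vector of a cycle of the underlying
multigraph of `D`, signs recording forward/backward edges of a cyclic traversal. -/
def IsSignedCycle (X : D.E → SignType) : Prop :=
  ∃ n : ℕ, 0 < n ∧ ∃ (v : ZMod n → D.V) (ed : ZMod n → D.E) (dir : ZMod n → Bool),
    Function.Injective v ∧ Function.Injective ed ∧
    (∀ i, (dir i = true → D.tail (ed i) = v i ∧ D.head (ed i) = v (i + 1)) ∧
      (dir i = false → D.tail (ed i) = v (i + 1) ∧ D.head (ed i) = v i)) ∧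
    (∀ i, X (ed i) = if dir i then 1 else -1) ∧
    (∀ f, (∀ i, ed i ≠ f) → X f = 0)

/-- The sub-multigraph spanned by `A` is a forest: it contains no cycle. -/
def IsForestOn (A : Set D.E) : Prop :=
  ¬ ∃ X : D.E → SignType, D.IsSignedCycle X ∧ ∀ e : D.E, X e ≠ 0 → e ∈ A

end MultiDigraph

/-! ## The cut space over 𝔽₂ -/

/-- Indicator vector of a set, over `𝔽₂ = ZMod 2`. -/
noncomputable def eindicator {α : Type} (C : Set α) : α → ZMod 2 := C.indicator 1

namespace MultiDigraph

variable (D : MultiDigraph)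

/-- The cut space of (the underlying multigraph of) `D`: the `𝔽₂`-span of the
indicator vectors of the bonds. -/
noncomputable def cutSpace : Submodule (ZMod 2) (D.E → ZMod 2) :=
  Submodule.span (ZMod 2) (eindicator '' {S : Set D.E | D.IsBond S})

/-- `ℬ` is a basis of the cut space of `D` (a family of edge sets whose indicator
vectors are linearly independent and span the cut space). -/
noncomputable def IsCutSpaceBasis (ℬ : Set (Set D.E)) : Prop :=
  LinearIndependent (ZMod 2) (fun S : ℬ => eindicator (S : Set D.E)) ∧
    Submodule.span (ZMod 2) (eindicator '' ℬ) = D.cutSpace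

end MultiDigraph

/-! ## Special digraphs -/

/-- The digraph `𝒟(n₀,n₁,n₂)`: three layers, with all edges from layer 0 to layer 1 and
from layer 1 to layer 2. -/
def layeredD (n₀ n₁ n₂ : ℕ) : MultiDigraph where
  V := (Fin n₀ ⊕ Fin n₁) ⊕ Fin n₂
  E := (Fin n₀ × Fin n₁) ⊕ (Fin n₁ × Fin n₂)
  tail := Sum.elim (fun p => Sum.inl (Sum.inl p.1)) (fun p => Sum.inl (Sum.inr p.1))
  head := Sum.elim (fun p => Sum.inl (Sum.inr p.2)) (fun p => Sum.inr p.2)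

/-- `K⃗_{m,n}`: the complete bipartite graph oriented from the class of size `m` to the
class of size `n`. -/
def oneDirK (m n : ℕ) : MultiDigraph where
  V := Fin m ⊕ Fin n
  E := Fin m × Fin n
  tail := fun p => Sum.inl p.1
  head := fun p => Sum.inr p.2

/-- A diamond: two hubs and `n` further vertices, each of which is either a source with its
two edges going to the hubs, or a sink with its two edges coming from the hubs
(`σ i = true` meaning `xᵢ` is a source). -/
def diamondD (n : ℕ) (σ : Fin n → Bool) : MultiDigraph where
  V := Fin n ⊕ Fin 2
  E := Fin n × Fin 2
  tail := fun p => if σ p.1 then Sum.inl p.1 else Sum.inr p.2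
  head := fun p => if σ p.1 then Sum.inr p.2 else Sum.inl p.1

/-- The bicycle `C⃡_k`: the cycle of length `k` with every edge replaced by a pair of
anti-parallel directed edges. -/
noncomputable def bicycle (k : ℕ) (hk : k ≠ 0) : MultiDigraph :=
  haveI : NeZero k := ⟨hk⟩
  { V := ZMod k
    E := ZMod k × Bool
    fv := inferInstance
    fe := inferInstance
    dv := inferInstance
    de := inferInstance
    tail := fun p => if p.2 then p.1 else p.1 + 1
    head := fun p => if p.2 then p.1 + 1 else p.1 }

/-- An odd diamond. -/
def IsOddDiamond (D : MultiDigraph) : Prop :=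
  ∃ (n : ℕ) (σ : Fin n → Bool), 3 ≤ n ∧ Odd (n + 2) ∧ IsIsomorphic D (diamondD n σ)

/-- An odd one-direction. -/
def IsOddOneDirection (D : MultiDigraph) : Prop :=
  ∃ m n : ℕ, 2 ≤ m ∧ 2 ≤ n ∧ Odd (m + n) ∧ IsIsomorphic D (oneDirK m n)

/-! ## Symmetric difference of a family of sets -/

/-- The symmetric difference of a finite family of sets. -/
def symmDiffFam {α : Type} {k : ℕ} (F : Fin k → Set α) : Set α :=
  {a | Odd ({i : Fin k | a ∈ F i}).ncard}

/-! ## Oriented matroids -/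

/-- Raw data of an oriented matroid: a finite ground set together with a collection of
signed subsets (encoded as functions to `SignType`). -/
structure PreOM : Type 1 where
  E : Type
  [fe : Fintype E]
  [de : DecidableEq E]
  circuits : Set (E → SignType)

attribute [instance] PreOM.fe PreOM.de

/-- The support of a signed set. -/
def sgnSupport {α : Type} (X : α → SignType) : Set α := {e | X e ≠ 0}

namespace PreOM

/-- The oriented matroid axioms for the collection of signed circuits. -/
def IsOM (M : PreOM) : Prop :=
  (0 : M.E → SignType) ∉ M.circuits ∧
  (∀ X ∈ M.circuits, -X ∈ M.circuits) ∧
  (∀ X ∈ M.circuits, ∀ Y ∈ M.circuits, sgnSupport X ⊆ sgnSupport Y → X = Y ∨ X = -Y) ∧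
  ∀ X ∈ M.circuits, ∀ Y ∈ M.circuits, X ≠ -Y → ∀ e : M.E, X e = 1 → Y e = -1 →
    ∃ Z ∈ M.circuits, (∀ f, Z f = 1 → f ≠ e ∧ (X f = 1 ∨ Y f = 1)) ∧
      ∀ f, Z f = -1 → f ≠ e ∧ (X f = -1 ∨ Y f = -1)

/-- The circuits of the underlying matroid: supports of signed circuits. -/
def UCircuits (M : PreOM) : Set (Set M.E) :=
  {C | ∃ X ∈ M.circuits, C = sgnSupport X}

/-- A directed circuit: the support of a signed circuit with empty negative part. -/
def IsDirectedCircuit (M : PreOM) (C : Set M.E) : Prop :=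
  ∃ X ∈ M.circuits, (∀ e, X e ≠ -1) ∧ C = {e | X e = 1}

/-- Independent sets of the underlying matroid. -/
def Indep (M : PreOM) (I : Set M.E) : Prop := ∀ C ∈ M.UCircuits, ¬ C ⊆ I

/-- Bases of the underlying matroid. -/
def IsBase (M : PreOM) (B : Set M.E) : Prop :=
  M.Indep B ∧ ∀ B', M.Indep B' → B ⊆ B' → B' = B

/-- Cocircuits of the underlying matroid: minimal sets meeting every base. -/
def IsCocircuit (M : PreOM) (S : Set M.E) : Prop :=
  (∀ B, M.IsBase B → (S ∩ B).Nonempty) ∧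
    ∀ S' : Set M.E, S' ⊂ S → ¬ ∀ B, M.IsBase B → (S' ∩ B).Nonempty

/-- Signed cocircuits: signed sets supported on a cocircuit and orthogonal to every
signed circuit. -/
def IsSignedCocircuit (M : PreOM) (Y : M.E → SignType) : Prop :=
  M.IsCocircuit (sgnSupport Y) ∧
    ∀ X ∈ M.circuits,
      ((∃ e, (Y e = 1 ∧ X e = 1) ∨ (Y e = -1 ∧ X e = -1)) ↔
        (∃ e, (Y e = 1 ∧ X e = -1) ∨ (Y e = -1 ∧ X e = 1)))

/-- An element `e` is butterfly-contractible if there is a cocircuit `S` with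
`(S \ {e}, {e})` a signed cocircuit. -/
def ButterflyContractible (M : PreOM) (e : M.E) : Prop :=
  ∃ Y : M.E → SignType, M.IsSignedCocircuit Y ∧ Y e = -1 ∧ ∀ f, f ≠ e → Y f ≠ -1

/-- Deletion of a set of elements. -/
noncomputable def deleteSet (M : PreOM) (A : Set M.E) : PreOM where
  E := {f : M.E // f ∉ A}
  fe := Fintype.ofFinite _
  de := Classical.decEq _
  circuits := {X : {f : M.E // f ∉ A} → SignType |
    ∃ X' ∈ M.circuits, (∀ a ∈ A, X' a = 0) ∧ ∀ f : {f : M.E // f ∉ A}, X f = X' f.1}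

/-- Contraction of a single element: signed circuits are the support-minimal nonempty
traces of signed circuits. -/
noncomputable def contractElem (M : PreOM) (e : M.E) : PreOM where
  E := {f : M.E // f ≠ e}
  fe := Fintype.ofFinite _
  de := Classical.decEq _
  circuits := {X : {f : M.E // f ≠ e} → SignType |
    X ≠ 0 ∧ ∃ X' ∈ M.circuits, (∀ f : {f : M.E // f ≠ e}, X f = X' f.1) ∧
      ¬ ∃ Z ∈ M.circuits, (sgnSupport Z \ {e}) ⊂ (sgnSupport X' \ {e})}

/-- Isomorphism of (pre-)oriented matroids. -/
def Iso (M N : PreOM) : Prop :=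
  ∃ σ : M.E ≃ N.E, ∀ X : N.E → SignType, X ∈ N.circuits ↔ (X ∘ σ) ∈ M.circuits

/-- A minimal dependent set of a vector configuration. -/
def IsMinimalDep {F : Type} [Field F] {n : ℕ} {E : Type} (φ : E → (Fin n → F))
    (C : Set E) : Prop :=
  ¬ LinearIndependent F (fun e : C => φ e.1) ∧
    ∀ C' : Set E, C' ⊂ C → LinearIndependent F (fun e : C' => φ e.1)

/-- The underlying matroid is regular: representable over every field. -/
def Regular (M : PreOM) : Prop :=
  ∀ (F : Type) [Field F], ∃ (n : ℕ) (φ : M.E → (Fin n → F)),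
    ∀ C : Set M.E, C ∈ M.UCircuits ↔ IsMinimalDep φ C

/-- `M` is non-even: its underlying matroid is regular and some set of elements meets
every directed circuit an odd number of times. -/
def NonEven (M : PreOM) : Prop :=
  M.Regular ∧ ∃ J : Set M.E, ∀ C : Set M.E, M.IsDirectedCircuit C → Odd (J ∩ C).ncard

/-- Totally cyclic: every element lies in a directed circuit. -/
def TotallyCyclic (M : PreOM) : Prop :=
  ∀ e : M.E, ∃ C : Set M.E, M.IsDirectedCircuit C ∧ e ∈ C

/-- Coindependent set: contains no cocircuit. -/
def Coindependent (M : PreOM) (A : Set M.E) : Prop :=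
  ∀ S : Set M.E, M.IsCocircuit S → ¬ S ⊆ A

/-- The circuit space of the underlying (binary) matroid, over `𝔽₂`. -/
noncomputable def circuitSpace (M : PreOM) : Submodule (ZMod 2) (M.E → ZMod 2) :=
  Submodule.span (ZMod 2) (eindicator '' M.UCircuits)

/-- A directed circuit basis: a family of directed circuits whose indicator vectors form a
basis of the circuit space. -/
noncomputable def IsDirectedCircuitBasis (M : PreOM) (ℬ : Set (Set M.E)) : Prop :=
  (∀ C ∈ ℬ, M.IsDirectedCircuit C) ∧
    LinearIndependent (ZMod 2) (fun C : ℬ => eindicator (C : Set M.E)) ∧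
    Submodule.span (ZMod 2) (eindicator '' ℬ) = M.circuitSpace

end PreOM

/-! ## GB-minors -/

/-- A single GB-minor step: deletion of an element, or contraction of a
butterfly-contractible element. -/
inductive GBStep : PreOM → PreOM → Prop
  | del (M : PreOM) (e : M.E) : GBStep (M.deleteSet {e}) M
  | con (M : PreOM) (e : M.E) (h : M.ButterflyContractible e) : GBStep (M.contractElem e) M

/-- `N` is a GB-minor of `M`. -/
def IsGBMinor (N M : PreOM) : Prop := ReflTransGen GBStep N M

/-! ## Oriented matroids from digraphs -/

/-- The oriented bond matroid `M*(D)` of a digraph `D`: signed circuits are the signed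
incidence vectors of the bonds of `D`. -/
def bondOM (D : MultiDigraph) : PreOM where
  E := D.E
  circuits := {X : D.E → SignType | ∃ W : Set D.V, D.IsBond (D.cutAt W) ∧
    ∀ e : D.E, (X e = 1 ↔ (D.tail e ∈ W ∧ D.head e ∉ W)) ∧
      (X e = -1 ↔ (D.head e ∈ W ∧ D.tail e ∉ W))}

/-- The oriented graphic matroid `M(D)` of a digraph `D`: signed circuits are the signed
incidence vectors of the cycles of the underlying multigraph of `D`. -/
def cycleOM (D : MultiDigraph) : PreOM where
  E := D.E
  circuits := {X : D.E → SignType | D.IsSignedCycle X}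


/-! Regularity: deleting restricts a representation, and contracting `e` projects it along the
vector of `e`, which is nonzero since a butterfly-contractible element is not a loop.

The odd set: a directed circuit of `M − A` or `M / e` is the trace of a directed circuit of `M`.
For the contraction this uses the signed cocircuit `(S ∖ e, {e})`: by orthogonality, a circuit that
is nonnegative off `e` cannot contain `e` negatively. After deletion the restriction of `J` still
works. Before contracting `e ∈ J`, replace `J` by `J ∆ S`: in a binary matroid circuits meet the
cocircuit `S` evenly, so this keeps every parity `|J ∩ C|` and removes `e` from `J`. -/

open Set Submodule

theorem Function.Injective.minimal_image_iff {ι κ : Type} {j : ι → κ} (hj : j.Injective)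
    {P : Set κ → Prop} {C : Set ι} :
    Minimal (fun s => P (j '' s)) C ↔ Minimal P (j '' C) := by
  simp only [Set.minimal_iff_forall_ssubset]
  refine and_congr_right fun _ => ⟨fun h t ht => ?_, fun h s hs => h (hj.image_strictMono hs)⟩
  have htj : t ⊆ range j := ht.subset.trans (image_subset_range j C)
  rw [← image_preimage_eq_of_subset htj] at ht ⊢
  exact h ((hj.injOn.image_ssubset_image_iff (subset_univ _) (subset_univ _)).1 ht)

theorem Subtype.image_val_preimage_val_ne {α : Type} (e : α) (T : Set α) :
    Subtype.val '' (Subtype.val ⁻¹' T : Set {f : α // f ≠ e}) = T \ {e} := by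
  ext f
  simp [and_comm]

theorem Set.ncard_symmDiff_add_two_mul_ncard_inter {α : Type} {A B : Set α} (hA : A.Finite)
    (hB : B.Finite) : (symmDiff A B).ncard + 2 * (A ∩ B).ncard = A.ncard + B.ncard := by
  have hunion : (A ∪ B).ncard = (symmDiff A B).ncard + (A ∩ B).ncard :=
    (congrArg ncard (symmDiff_sup_inf A B).symm).trans <| ncard_union_eq
      (disjoint_symmDiff_inf A B) ((hA.union hB).subset symmDiff_subset_union) (hA.inter_of_left B)
  have := ncard_union_add_ncard_inter A B hA hB
  omega

theorem Set.odd_ncard_symmDiff_inter_iff {α : Type} [Finite α] {J S C : Set α}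
    (hSC : Even (S ∩ C).ncard) : Odd (symmDiff J S ∩ C).ncard ↔ Odd (J ∩ C).ncard := by
  have := ncard_symmDiff_add_two_mul_ncard_inter (A := J ∩ C) (B := S ∩ C) (toFinite _)
    (toFinite _)
  rw [inter_symmDiff_distrib_right, Nat.odd_iff, Nat.odd_iff]
  rw [Nat.even_iff] at hSC
  omega

section LinearIndependence

variable {F : Type} [Field F] {V : Type} [AddCommGroup V] [Module F V] {ι : Type}

theorem linearIndepOn_comp_iff {κ : Type} {j : ι → κ} (hj : j.Injective) {ψ : κ → V}
    {s : Set ι} : LinearIndepOn F (ψ ∘ j) s ↔ LinearIndepOn F ψ (j '' s) :=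
  ⟨LinearIndepOn.image_of_comp j ψ, fun h => h.comp_of_image hj.injOn⟩

theorem linearIndepOn_mkQ_span_singleton_iff {ψ : ι → V} {i : ι} (hi : ψ i ≠ 0) {s : Set ι}
    (his : i ∉ s) :
    LinearIndepOn F ((span F {ψ i}).mkQ ∘ ψ) s ↔ LinearIndepOn F ψ (insert i s) := by
  have hdisj : Disjoint {i} s := disjoint_singleton_left.2 his
  rw [← singleton_union, ← ((linearIndepOn_singleton_iff F).2 hi).quotient_iff_union hdisj,
    image_singleton]

theorem exists_linearCombination_eq_zero_of_minimal {ψ : ι → V} {C : Set ι}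
    (hC : Minimal (fun C => ¬ LinearIndepOn F ψ C) C) :
    ∃ l : ι →₀ F, (l.support : Set ι) = C ∧ Finsupp.linearCombination F ψ l = 0 := by
  obtain ⟨l, hlC, hl0, hl⟩ : ∃ l ∈ Finsupp.supported F F C,
      Finsupp.linearCombination F ψ l = 0 ∧ l ≠ 0 := by
    simpa [linearIndepOn_iff] using hC.prop
  refine ⟨l, hC.eq_of_subset ?_ hlC, hl0⟩
  rw [linearIndepOn_iff]
  exact fun h => hl (h l (Finsupp.mem_supported F l |>.2 subset_rfl) hl0)

end LinearIndependence

namespace PreOM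

/-- Unlike in `Regular`, the vectors may lie in any vector space, e.g. in a quotient. -/
def IsRep (M : PreOM) (F : Type) [Field F] {V : Type} [AddCommGroup V] [Module F V]
    (ψ : M.E → V) : Prop :=
  ∀ C, C ∈ M.UCircuits ↔ Minimal (fun C => ¬ LinearIndepOn F ψ C) C

variable {M : PreOM} {F : Type} [Field F] {V : Type} [AddCommGroup V] [Module F V]

theorem isMinimalDep_iff_minimal {n : ℕ} {E : Type} {φ : E → Fin n → F} {C : Set E} :
    IsMinimalDep φ C ↔ Minimal (fun C => ¬ LinearIndepOn F φ C) C := by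
  rw [Set.minimal_iff_forall_ssubset]
  simp only [not_not]
  rfl

theorem regular_iff : M.Regular ↔ ∀ (F : Type) [Field F], ∃ (n : ℕ) (φ : M.E → Fin n → F),
    M.IsRep F φ := by
  simp only [Regular, IsRep, isMinimalDep_iff_minimal]

theorem IsRep.comp_injective {W : Type} [AddCommGroup W] [Module F W] {ψ : M.E → V}
    (hψ : M.IsRep F ψ) {f : V →ₗ[F] W} (hf : Function.Injective f) : M.IsRep F (f ∘ ψ) := by
  intro C
  simp only [hψ C, f.linearIndepOn_iff_of_injOn hf.injOn]

theorem IsRep.exists_fin [FiniteDimensional F V] {ψ : M.E → V} (hψ : M.IsRep F ψ) :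
    ∃ (n : ℕ) (φ : M.E → Fin n → F), M.IsRep F φ :=
  ⟨_, _, hψ.comp_injective (Module.finBasis F V).equivFun.injective⟩

section IsRep

variable {ψ : M.E → V} (hψ : M.IsRep F ψ)
include hψ

theorem IsRep.exists_mem_uCircuits_subset {T : Set M.E} (hT : ¬ LinearIndepOn F ψ T) :
    ∃ C ∈ M.UCircuits, C ⊆ T := by
  obtain ⟨C, hCT, hC⟩ := exists_minimal_le_of_wellFoundedLT (fun C => ¬ LinearIndepOn F ψ C) T hT
  exact ⟨C, (hψ C).2 hC, hCT⟩

theorem IsRep.indep_iff {I : Set M.E} : M.Indep I ↔ LinearIndepOn F ψ I := by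
  refine ⟨fun hI => by_contra fun hdep => ?_, fun hI C hC hCI => ((hψ C).1 hC).prop (hI.mono hCI)⟩
  obtain ⟨C, hC, hCI⟩ := hψ.exists_mem_uCircuits_subset hdep
  exact hI C hC hCI

theorem IsRep.mem_span_of_isBase {B : Set M.E} (hB : M.IsBase B) (f : M.E) :
    ψ f ∈ span F (ψ '' B) := by
  by_contra hf
  have hfB : f ∉ B := fun h => hf (subset_span (mem_image_of_mem ψ h))
  have hind : M.Indep (insert f B) :=
    (hψ.indep_iff).2 ((linearIndepOn_insert hfB).2 ⟨(hψ.indep_iff).1 hB.1, hf⟩)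
  exact hfB (hB.2 _ hind (subset_insert f B) ▸ mem_insert f B)

theorem IsRep.exists_isBase_subset {T : Set M.E} (hT : ∀ f, ψ f ∈ span F (ψ '' T)) :
    ∃ B ⊆ T, M.IsBase B := by
  obtain ⟨B, hBT, -, hTB, hB⟩ := exists_linearIndepOn_extension (linearIndepOn_empty F ψ)
    (empty_subset T)
  have hspan : ∀ f, ψ f ∈ span F (ψ '' B) := fun f => span_le.2 hTB (hT f)
  refine ⟨B, hBT, (hψ.indep_iff).2 hB, fun B' hB' hBB' => ?_⟩
  refine (hBB'.antisymm fun f hf => by_contra fun hfB => ?_).symm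
  have := ((hψ.indep_iff).1 hB').mono (insert_subset hf hBB')
  exact ((linearIndepOn_insert hfB).1 this).2 (hspan f)

theorem IsRep.exists_isBase : ∃ B, M.IsBase B := by
  obtain ⟨B, -, hB⟩ := hψ.exists_isBase_subset (T := univ) fun f => subset_span ⟨f, trivial, rfl⟩
  exact ⟨B, hB⟩

theorem IsRep.nonempty_of_isCocircuit {S : Set M.E} (hS : M.IsCocircuit S) : S.Nonempty := by
  obtain ⟨B, hB⟩ := hψ.exists_isBase
  exact (hS.1 B hB).mono inter_subset_left

theorem IsRep.mem_span_insert_compl {S : Set M.E} (hS : M.IsCocircuit S) {s : M.E} (hs : s ∈ S)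
    (f : M.E) : ψ f ∈ span F (ψ '' insert s Sᶜ) := by
  obtain ⟨B, hB, hBS⟩ : ∃ B, M.IsBase B ∧ ¬ ((S \ {s}) ∩ B).Nonempty := by
    simpa using hS.2 (S \ {s}) (sdiff_singleton_ssubset.2 hs)
  have hBsub : B ⊆ insert s Sᶜ := fun b hb => by
    by_contra h
    simp only [mem_insert_iff, mem_compl_iff, not_or, not_not] at h
    exact hBS ⟨b, ⟨h.2, h.1⟩, hb⟩
  exact span_mono (image_mono hBsub) (hψ.mem_span_of_isBase hB f)

theorem IsRep.notMem_span_compl {S : Set M.E} (hS : M.IsCocircuit S) {s : M.E} (hs : s ∈ S) :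
    ψ s ∉ span F (ψ '' Sᶜ) := by
  intro hsW
  have hspan : ∀ f, ψ f ∈ span F (ψ '' Sᶜ) := fun f => by
    simpa [image_insert_eq, span_insert_eq_span hsW] using hψ.mem_span_insert_compl hS hs f
  obtain ⟨B, hBS, hB⟩ := hψ.exists_isBase_subset hspan
  obtain ⟨x, hxS, hxB⟩ := hS.1 B hB
  exact hBS hxB hxS

end IsRep

section Binary

variable {W : Type} [AddCommGroup W] [Module (ZMod 2) W] {ψ : M.E → W}
  (hψ : M.IsRep (ZMod 2) ψ)
include hψ

theorem IsRep.exists_finset_sum_eq_zero {C : Set M.E} (hC : C ∈ M.UCircuits) :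
    ∃ s : Finset M.E, (s : Set M.E) = C ∧ ∑ f ∈ s, ψ f = 0 := by
  obtain ⟨l, hlC, hl⟩ := exists_linearCombination_eq_zero_of_minimal ((hψ C).1 hC)
  refine ⟨l.support, hlC, ?_⟩
  rw [Finsupp.linearCombination_apply, Finsupp.sum] at hl
  refine (Finset.sum_congr rfl fun f hf => ?_).trans hl
  rw [(by decide : ∀ a : ZMod 2, a ≠ 0 → a = 1) _ (Finsupp.mem_support_iff.1 hf), one_smul]

theorem IsRep.mkQ_span_compl_eq {S : Set M.E} (hS : M.IsCocircuit S) {s t : M.E} (hs : s ∈ S)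
    (ht : t ∈ S) : (span (ZMod 2) (ψ '' Sᶜ)).mkQ (ψ t) = (span (ZMod 2) (ψ '' Sᶜ)).mkQ (ψ s) := by
  set q := (span (ZMod 2) (ψ '' Sᶜ)).mkQ
  obtain ⟨a, z, hz, htz⟩ := mem_span_insert.1 <| by
    simpa [image_insert_eq] using hψ.mem_span_insert_compl hS hs t
  have hqt : q (ψ t) ≠ 0 := fun h => hψ.notMem_span_compl hS ht ((Quotient.mk_eq_zero _).1 h)
  have hqz : q z = 0 := (Quotient.mk_eq_zero _).2 hz
  rw [htz, map_add, map_smul, hqz, add_zero] at hqt ⊢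
  rcases (by decide : ∀ a : ZMod 2, a = 0 ∨ a = 1) a with rfl | rfl
  · simp at hqt
  · rw [one_smul]

theorem IsRep.even_ncard_inter_of_isCocircuit {S C : Set M.E} (hS : M.IsCocircuit S)
    (hC : C ∈ M.UCircuits) : Even (C ∩ S).ncard := by
  classical
  set q := (span (ZMod 2) (ψ '' Sᶜ)).mkQ
  obtain ⟨s₀, hs₀⟩ := hψ.nonempty_of_isCocircuit hS
  have hq : ∀ f, q (ψ f) = if f ∈ S then q (ψ s₀) else 0 := fun f => by
    split_ifs with hf
    · exact hψ.mkQ_span_compl_eq hS hs₀ hf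
    · exact (Quotient.mk_eq_zero _).2 (subset_span ⟨f, hf, rfl⟩)
  obtain ⟨s, rfl, hs⟩ := hψ.exists_finset_sum_eq_zero hC
  have hsum : ((s.filter (· ∈ S)).card : ZMod 2) • q (ψ s₀) = 0 := by
    have h0 := congrArg q hs
    rwa [map_sum, map_zero, Finset.sum_congr rfl fun f _ => hq f, ← Finset.sum_filter,
      Finset.sum_const, ← Nat.cast_smul_eq_nsmul (ZMod 2)] at h0
  have hv : q (ψ s₀) ≠ 0 := fun h => hψ.notMem_span_compl hS hs₀ ((Quotient.mk_eq_zero _).1 h)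
  have hcard : (s.filter (· ∈ S)).card = ((s : Set M.E) ∩ S).ncard := by
    rw [← ncard_coe_finset, Finset.coe_filter]
    rfl
  rw [← hcard, ← ZMod.natCast_eq_zero_iff_even]
  exact (smul_eq_zero.1 hsum).resolve_right hv

end Binary

theorem mem_uCircuits_deleteSet_iff {A : Set M.E} {C : Set {f : M.E // f ∉ A}} :
    C ∈ (M.deleteSet A).UCircuits ↔ Subtype.val '' C ∈ M.UCircuits := by
  constructor
  · rintro ⟨X, ⟨X', hX', hX'A, hXX'⟩, rfl⟩
    refine ⟨X', hX', Set.ext fun f => ⟨?_, fun hf => ?_⟩⟩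
    · rintro ⟨g, hg, rfl⟩
      exact show X' g ≠ 0 from hXX' g ▸ hg
    · have hfA : f ∉ A := fun hfA => hf (hX'A f hfA)
      exact ⟨⟨f, hfA⟩, show X ⟨f, hfA⟩ ≠ 0 from (hXX' ⟨f, hfA⟩).symm ▸ hf, rfl⟩
  · rintro ⟨X', hX', hC⟩
    refine ⟨fun f : {f : M.E // f ∉ A} => X' f,
      ⟨X', hX', fun a ha => by_contra fun h => ?_, fun f => rfl⟩, ?_⟩
    · obtain ⟨f, -, rfl⟩ : a ∈ Subtype.val '' C := hC ▸ h
      exact f.2 ha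
    · rw [← preimage_image_eq C Subtype.val_injective, hC]
      rfl

theorem IsRep.deleteSet {ψ : M.E → V} (hψ : M.IsRep F ψ) (A : Set M.E) :
    (M.deleteSet A).IsRep F (fun f : {f : M.E // f ∉ A} => ψ f) := by
  intro C
  have key := Subtype.val_injective.minimal_image_iff (C := C)
    (P := fun C => ¬ LinearIndepOn F ψ C)
  simp only [← linearIndepOn_comp_iff Subtype.val_injective] at key
  exact mem_uCircuits_deleteSet_iff.trans ((hψ _).trans key.symm)

theorem IsDirectedCircuit.exists_of_deleteSet {A : Set M.E} {C : Set {f : M.E // f ∉ A}}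
    (hC : (M.deleteSet A).IsDirectedCircuit C) :
    ∃ C', M.IsDirectedCircuit C' ∧ Disjoint C' A ∧ C = Subtype.val ⁻¹' C' := by
  obtain ⟨X, ⟨X', hX', hX'A, hXX'⟩, hX, rfl⟩ := hC
  have hX'pos : ∀ f, X' f ≠ -1 := fun f => by
    by_cases hf : f ∈ A
    · simp [hX'A f hf]
    · simpa [hXX'] using hX ⟨f, hf⟩
  refine ⟨{f | X' f = 1}, ⟨X', hX', hX'pos, rfl⟩, ?_, ?_⟩
  · exact disjoint_left.2 fun f hf hfA => by simp [hX'A f hfA] at hf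
  · ext f
    exact iff_of_eq (congrArg (· = 1) (hXX' f))

theorem IsSignedCocircuit.apply_ne {Y X : M.E → SignType} (hY : M.IsSignedCocircuit Y)
    (hX : X ∈ M.circuits) {e : M.E} (hYe : Y e = -1) (hYpos : ∀ f, f ≠ e → Y f ≠ -1)
    {s : SignType} (hs : s ≠ 0) (hXs : ∀ f, f ≠ e → X f ≠ s) : X e ≠ s := by
  -- orthogonality would need a position of the opposite kind to `e`, where `X` and `Y` agree
  -- (`s = -1`) or disagree (`s = 1`); the sign conditions leave none
  intro hXe
  have horth := hY.2 X hX
  rcases s with _ | _ | _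
  · exact hs rfl
  · obtain ⟨f, hf⟩ := horth.1 ⟨e, Or.inr ⟨hYe, hXe⟩⟩
    by_cases hfe : f = e
    · subst hfe; simp_all
    · have := hYpos f hfe; have := hXs f hfe; simp_all
  · obtain ⟨f, hf⟩ := horth.2 ⟨e, Or.inr ⟨hYe, hXe⟩⟩
    by_cases hfe : f = e
    · subst hfe; simp_all
    · have := hYpos f hfe; have := hXs f hfe; simp_all

theorem ButterflyContractible.singleton_notMem_uCircuits {e : M.E}
    (he : M.ButterflyContractible e) : {e} ∉ M.UCircuits := by
  rintro ⟨X, hX, hXe⟩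
  obtain ⟨Y, hY, hYe, hYpos⟩ := he
  have hX0 : ∀ f, f ≠ e → X f = 0 := fun f hf => by
    by_contra h
    exact hf (show f ∈ ({e} : Set M.E) from hXe ▸ h)
  have hXe0 : X e ≠ 0 := show e ∈ sgnSupport X from hXe ▸ rfl
  have hne : ∀ s : SignType, s ≠ 0 → X e ≠ s := fun s hs =>
    hY.apply_ne hX hYe hYpos hs fun f hf => by rw [hX0 f hf]; exact hs.symm
  exact hne (X e) hXe0 rfl

theorem mem_uCircuits_contractElem_iff {e : M.E} {C : Set {f : M.E // f ≠ e}} :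
    C ∈ (M.contractElem e).UCircuits ↔ C.Nonempty ∧ ∃ C' ∈ M.UCircuits,
      C = Subtype.val ⁻¹' C' ∧ ¬ ∃ Z ∈ M.UCircuits, Z \ {e} ⊂ C' \ {e} := by
  constructor
  · rintro ⟨X, ⟨hX0, X', hX', hXX', hmin⟩, rfl⟩
    obtain ⟨f, hf⟩ := Function.ne_iff.1 hX0
    refine ⟨⟨f, hf⟩, _, ⟨X', hX', rfl⟩, ?_, fun ⟨_, ⟨Z, hZ, hZX⟩, hZ'⟩ => hmin ⟨Z, hZ, hZX ▸ hZ'⟩⟩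
    ext f
    exact not_congr (iff_of_eq (congrArg (· = 0) (hXX' f)))
  · rintro ⟨⟨f, hf⟩, _, ⟨X', hX', rfl⟩, rfl, hmin⟩
    refine ⟨fun f : {f : M.E // f ≠ e} => X' f, ⟨fun h => hf (congrFun h f), X', hX', fun f => rfl,
      fun ⟨Z, hZ, hZX⟩ => hmin ⟨_, ⟨Z, hZ, rfl⟩, hZX⟩⟩, rfl⟩

theorem IsRep.ne_zero_of_singleton_notMem {ψ : M.E → V} (hψ : M.IsRep F ψ) {e : M.E}
    (he : {e} ∉ M.UCircuits) : ψ e ≠ 0 := fun h0 =>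
  he <| (hψ {e}).2 <| Set.minimal_iff_forall_ssubset.2
    ⟨by rwa [linearIndepOn_singleton_iff F, not_not], fun t ht hdep =>
      hdep (ssubset_singleton_iff.1 ht ▸ linearIndepOn_empty F ψ)⟩

theorem IsRep.mem_uCircuits_contractElem_iff_minimal {ψ : M.E → V} (hψ : M.IsRep F ψ) {e : M.E}
    (he : {e} ∉ M.UCircuits) {C : Set {f : M.E // f ≠ e}} :
    C ∈ (M.contractElem e).UCircuits ↔
      Minimal (fun C => ¬ LinearIndepOn F ψ (insert e (Subtype.val '' C))) C := by
  have himage := Subtype.image_val_preimage_val_ne e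
  have hdep : ∀ T ∈ M.UCircuits, ¬ LinearIndepOn F ψ (insert e (Subtype.val ''
      (Subtype.val ⁻¹' T : Set {f : M.E // f ≠ e}))) := fun T hT h =>
    ((hψ T).1 hT).prop (h.mono (by rw [himage, insert_sdiff_singleton]; exact subset_insert e T))
  rw [mem_uCircuits_contractElem_iff, Set.minimal_iff_forall_ssubset]
  constructor
  · rintro ⟨-, C', hC', rfl, hmin⟩
    refine ⟨hdep C' hC', fun C₁ hC₁ hC₁dep => hmin ?_⟩
    obtain ⟨Z, hZ, hZC₁⟩ := hψ.exists_mem_uCircuits_subset hC₁dep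
    have hZ' : Z \ {e} ⊆ Subtype.val '' C₁ := fun f ⟨hfZ, hfe⟩ =>
      (mem_insert_iff.1 (hZC₁ hfZ)).resolve_left hfe
    have hC₁' : Subtype.val '' C₁ ⊂ C' \ {e} := himage C' ▸
      (Subtype.val_injective.injOn.image_ssubset_image_iff (subset_univ _) (subset_univ _)).2 hC₁
    exact ⟨Z, hZ, ssubset_of_subset_of_ssubset hZ' hC₁'⟩
  · rintro ⟨hCdep, hmin⟩
    obtain ⟨C', hC', hC'sub⟩ := hψ.exists_mem_uCircuits_subset hCdep
    have hC'C : Subtype.val ⁻¹' C' ⊆ C := fun f hf => by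
      obtain ⟨g, hg, hgf⟩ := (mem_insert_iff.1 (hC'sub hf)).resolve_left f.2
      exact Subtype.val_injective hgf ▸ hg
    have hC : Subtype.val ⁻¹' C' = C :=
      by_contra fun hne => hmin (hC'C.ssubset_of_ne hne) (hdep C' hC')
    refine ⟨?_, C', hC', hC.symm, fun ⟨Z, hZ, hZC'⟩ => hmin ?_ (hdep Z hZ)⟩
    · rw [← hC, nonempty_iff_ne_empty]
      intro hC0
      have hC'e : C' ⊆ {e} := fun f hf => by_contra fun hfe =>
        hC0.subset (show (⟨f, hfe⟩ : {f : M.E // f ≠ e}) ∈ Subtype.val ⁻¹' C' from hf)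
      rcases subset_singleton_iff_eq.1 hC'e with h | h
      · exact ((hψ C').1 hC').prop (h ▸ linearIndepOn_empty F ψ)
      · exact he (h ▸ hC')
    · rw [← hC, ← Subtype.val_injective.injOn.image_ssubset_image_iff (subset_univ _)
        (subset_univ _), himage, himage]
      exact hZC'

theorem IsRep.contractElem {ψ : M.E → V} (hψ : M.IsRep F ψ) {e : M.E}
    (he : {e} ∉ M.UCircuits) :
    (M.contractElem e).IsRep F (fun f : {f : M.E // f ≠ e} => (span F {ψ e}).mkQ (ψ f)) := by
  have hind : (fun C : Set {f : M.E // f ≠ e} =>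
      ¬ LinearIndepOn F (fun f : {f : M.E // f ≠ e} => (span F {ψ e}).mkQ (ψ f)) C) =
      fun C => ¬ LinearIndepOn F ψ (insert e (Subtype.val '' C)) := funext fun C => by
    rw [← linearIndepOn_mkQ_span_singleton_iff (hψ.ne_zero_of_singleton_notMem he)
      (by simp), ← linearIndepOn_comp_iff Subtype.val_injective]
    rfl
  exact fun C => (hψ.mem_uCircuits_contractElem_iff_minimal he).trans (hind ▸ Iff.rfl)

theorem IsSignedCocircuit.exists_of_isDirectedCircuit_contractElem {Y : M.E → SignType}
    (hY : M.IsSignedCocircuit Y) {e : M.E} (hYe : Y e = -1) (hYpos : ∀ f, f ≠ e → Y f ≠ -1)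
    {C : Set {f : M.E // f ≠ e}} (hC : (M.contractElem e).IsDirectedCircuit C) :
    ∃ C', M.IsDirectedCircuit C' ∧ C = Subtype.val ⁻¹' C' := by
  obtain ⟨X, ⟨-, X', hX', hXX', -⟩, hX, rfl⟩ := hC
  have hX'pos : ∀ f, f ≠ e → X' f ≠ -1 := fun f hf => hXX' ⟨f, hf⟩ ▸ hX ⟨f, hf⟩
  have hX'e : X' e ≠ -1 := hY.apply_ne hX' hYe hYpos (by decide) hX'pos
  refine ⟨{f | X' f = 1}, ⟨X', hX', fun f => ?_, rfl⟩, ?_⟩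
  · by_cases hf : f = e
    · exact hf ▸ hX'e
    · exact hX'pos f hf
  · ext f
    exact iff_of_eq (congrArg (· = 1) (hXX' f))

theorem IsDirectedCircuit.mem_uCircuits {C : Set M.E} (hC : M.IsDirectedCircuit C) :
    C ∈ M.UCircuits := by
  obtain ⟨X, hX, hXpos, rfl⟩ := hC
  refine ⟨X, hX, Set.ext fun f => show X f = 1 ↔ X f ≠ 0 from ?_⟩
  have := hXpos f
  generalize X f = s at this ⊢
  decide +revert

theorem IsRep.exists_notMem_odd_ncard_inter_iff {W : Type} [AddCommGroup W]
    [Module (ZMod 2) W] {ψ : M.E → W} (hψ : M.IsRep (ZMod 2) ψ) {S : Set M.E}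
    (hS : M.IsCocircuit S) {e : M.E} (he : e ∈ S) (J : Set M.E) :
    ∃ J', e ∉ J' ∧ ∀ C ∈ M.UCircuits, (Odd (J' ∩ C).ncard ↔ Odd (J ∩ C).ncard) := by
  by_cases heJ : e ∈ J
  · refine ⟨symmDiff J S, by simp [mem_symmDiff, heJ, he], fun C hC => ?_⟩
    exact odd_ncard_symmDiff_inter_iff (inter_comm C S ▸ hψ.even_ncard_inter_of_isCocircuit hS hC)
  · exact ⟨J, heJ, fun _ _ => Iff.rfl⟩

theorem Regular.deleteSet (h : M.Regular) (A : Set M.E) : (M.deleteSet A).Regular :=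
  regular_iff.2 fun F _ =>
    let ⟨n, _, hφ⟩ := regular_iff.1 h F
    ⟨n, _, hφ.deleteSet A⟩

theorem Regular.contractElem (h : M.Regular) {e : M.E} (he : {e} ∉ M.UCircuits) :
    (M.contractElem e).Regular :=
  regular_iff.2 fun F _ =>
    let ⟨_, _, hφ⟩ := regular_iff.1 h F
    (hφ.contractElem he).exists_fin

theorem NonEven.deleteSet (h : M.NonEven) (A : Set M.E) : (M.deleteSet A).NonEven := by
  obtain ⟨hreg, J, hJ⟩ := h
  refine ⟨hreg.deleteSet A, Subtype.val ⁻¹' J, fun C hC => ?_⟩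
  obtain ⟨C', hC', hC'A, rfl⟩ := hC.exists_of_deleteSet
  show Odd (Subtype.val ⁻¹' J ∩ Subtype.val ⁻¹' C' : Set {f : M.E // f ∉ A}).ncard
  rw [← preimage_inter, ncard_preimage_of_injective_subset_range Subtype.val_injective]
  · exact hJ C' hC'
  · exact fun f hf => ⟨⟨f, disjoint_left.1 hC'A hf.2⟩, rfl⟩

theorem NonEven.contractElem (h : M.NonEven) {e : M.E} (he : M.ButterflyContractible e) :
    (M.contractElem e).NonEven := by
  obtain ⟨hreg, J, hJ⟩ := h
  obtain ⟨Y, hY, hYe, hYpos⟩ := id he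
  obtain ⟨n, ψ, hψ⟩ := regular_iff.1 hreg (ZMod 2)
  obtain ⟨J', heJ', hJ'⟩ :=
    hψ.exists_notMem_odd_ncard_inter_iff hY.1 (show Y e ≠ 0 by simp [hYe]) J
  refine ⟨hreg.contractElem he.singleton_notMem_uCircuits, Subtype.val ⁻¹' J', fun C hC => ?_⟩
  obtain ⟨C', hC', rfl⟩ := hY.exists_of_isDirectedCircuit_contractElem hYe hYpos hC
  show Odd (Subtype.val ⁻¹' J' ∩ Subtype.val ⁻¹' C' : Set {f : M.E // f ≠ e}).ncard
  rw [← preimage_inter, ncard_preimage_of_injective_subset_range Subtype.val_injective,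
    hJ' C' hC'.mem_uCircuits]
  · exact hJ C' hC'
  · exact fun f hf => ⟨⟨f, fun hfe => heJ' (hfe ▸ hf.1)⟩, rfl⟩

theorem NonEven.of_gbStep {N M : PreOM} (h : GBStep N M) (hM : M.NonEven) : N.NonEven := by
  cases h with
  | del M e => exact hM.deleteSet {e}
  | con M e he => exact hM.contractElem he

end PreOM

theorem stmt3_general (M : PreOM) (hNE : M.NonEven)
    (N : PreOM) (hmin : IsGBMinor N M) : N.NonEven := by
  induction hmin using Relation.ReflTransGen.head_induction_on with
  | refl => exact hNE
  | head hstep _ ih => exact PreOM.NonEven.of_gbStep hstep ih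

theorem stmt3 (M : PreOM) (hM : M.IsOM) (hNE : M.NonEven)
    (N : PreOM) (hmin : IsGBMinor N M) : N.NonEven :=
  stmt3_general M hNE N hmin
end

section
/- Let D₁ and D₂ be digraphs such that D₁ is a cut minor of D₂. If D₂ admits an odd dijoin, then so does D₁. -/
open Relation

/-!
Each cut-minor step pulls directed bonds of the minor back to directed bonds of the larger
digraph `D`. Shores of cuts of `D / e` and of `D - v` pull back to shores in `D`; a directed cut
of `D - e` stays directed in `D` when `e = (x, y)` is deletable, since the `x`–`y` path avoiding
`e` would otherwise enter its shore. The lifted cut `S` is again a bond: a proper subcut `C` would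
split `S` into the cuts `C` and `S \ C`, both pulling back to the whole original bond. Hence an
odd dijoin of `D` restricts to one of the minor; when deleting `e`, first take `e` out of the
dijoin by adding the cycle formed by `e` and the path, which meets every cut evenly.
-/

open scoped symmDiff

theorem Set.odd_ncard_symmDiff {α : Type*} [Finite α] (s t : Set α) :
    Odd (s ∆ t).ncard ↔ ¬(Odd s.ncard ↔ Odd t.ncard) := by
  have hunion := Set.ncard_union_add_ncard_inter s t
  have hdiff : (s ∆ t).ncard + (s ∩ t).ncard = (s ∪ t).ncard := by
    rw [symmDiff_eq_sup_sdiff_inf]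
    exact Set.ncard_sdiff_add_ncard_of_subset inf_le_sup
  simp only [Nat.odd_iff]
  omega

theorem Set.odd_ncard_singleton_inter {α : Type*} (a : α) (s : Set α) :
    Odd ({a} ∩ s).ncard ↔ a ∈ s := by
  by_cases ha : a ∈ s
  · simp [Set.singleton_inter_of_mem ha, ha]
  · simp [Set.singleton_inter_eq_empty.mpr ha, ha]

namespace MultiDigraph

variable {D D' : MultiDigraph}

theorem mem_cutAt_iff {X : Set D.V} {f : D.E} :
    f ∈ D.cutAt X ↔ ¬(D.tail f ∈ X ↔ D.head f ∈ X) := by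
  simp only [cutAt, Set.mem_ofPred_eq]
  tauto

theorem cutAt_symmDiff (X Y : Set D.V) : D.cutAt (X ∆ Y) = D.cutAt X ∆ D.cutAt Y := by
  ext f
  simp only [mem_cutAt_iff, Set.mem_symmDiff]
  tauto

theorem IsCut.diff {S C : Set D.E} (hS : D.IsCut S) (hC : D.IsCut C) (hCS : C ⊂ S) :
    D.IsCut (S \ C) := by
  obtain ⟨-, X, rfl⟩ := hS
  obtain ⟨-, Y, rfl⟩ := hC
  exact ⟨Set.sdiff_nonempty.mpr hCS.2, X ∆ Y, by rw [cutAt_symmDiff, symmDiff_of_ge hCS.1]⟩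

theorem isBond_of_isBond_preimage (ι : D'.E → D.E) {S : Set D.E} (hS : D.IsCut S)
    (hbond : D'.IsBond (ι ⁻¹' S)) (hpull : ∀ C ⊆ S, D.IsCut C → D'.IsCut (ι ⁻¹' C)) :
    D.IsBond S := by
  refine ⟨hS, fun C hC hCS => ?_⟩
  by_contra hne
  have hdiff := hS.diff hC (hCS.ssubset_of_ne hne)
  have hC' := hbond.2 _ (hpull C hCS hC) (Set.preimage_mono hCS)
  have hdiff' := hbond.2 _ (hpull _ Set.sdiff_subset hdiff) (Set.preimage_mono Set.sdiff_subset)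
  obtain ⟨f, hf⟩ := hbond.1.1
  have hfC : f ∈ ι ⁻¹' C := by rwa [hC']
  have hfdiff : f ∈ ι ⁻¹' (S \ C) := by rwa [hdiff']
  exact hfdiff.2 hfC

theorem IsOddDijoin.preimage {ι : D'.E → D.E} (hι : Function.Injective ι) {K : Set D.E}
    (hK : D.IsOddDijoin K)
    (hlift : ∀ S', D'.IsDirectedBond S' →
      ∃ S, D.IsDirectedBond S ∧ S' = ι ⁻¹' S ∧ K ∩ S ⊆ Set.range ι) :
    D'.IsOddDijoin (ι ⁻¹' K) := by
  intro S' hS'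
  obtain ⟨S, hS, rfl, hrange⟩ := hlift S' hS'
  rw [← Set.preimage_inter, Set.ncard_preimage_of_injective_subset_range hι hrange]
  exact hK S hS

def MeetsCutsEvenly (C : Set D.E) : Prop := ∀ X : Set D.V, Even (C ∩ D.cutAt X).ncard

theorem IsOddDijoin.symmDiff {J C : Set D.E} (hJ : D.IsOddDijoin J) (hC : D.MeetsCutsEvenly C) :
    D.IsOddDijoin (J ∆ C) := by
  intro S hS
  have hJS := hJ S hS
  obtain ⟨-, -, X, rfl, -⟩ := hS
  have hCX := Nat.not_odd_iff_even.mpr (hC X)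
  rw [Set.inter_symmDiff_distrib_right, Set.odd_ncard_symmDiff]
  tauto

theorem exists_odd_ncard_inter_cutAt_iff_of_walk {e : D.E} {a b : D.V}
    (h : ReflTransGen (D.dstepAvoiding e) a b) :
    ∃ T : Set D.E, e ∉ T ∧ ∀ X, Odd (T ∩ D.cutAt X).ncard ↔ ¬(a ∈ X ↔ b ∈ X) := by
  induction h with
  | refl => exact ⟨∅, Set.notMem_empty e, fun X => by simp⟩
  | tail _ step ih =>
    obtain ⟨T, heT, hT⟩ := ih
    obtain ⟨f, hfe, rfl, rfl⟩ := step
    refine ⟨T ∆ {f}, fun h => ?_, fun X => ?_⟩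
    · rcases Set.mem_symmDiff.mp h with ⟨heT', -⟩ | ⟨rfl, -⟩
      exacts [heT heT', hfe rfl]
    · rw [Set.inter_symmDiff_distrib_right, Set.odd_ncard_symmDiff, hT X,
        Set.odd_ncard_singleton_inter, mem_cutAt_iff]
      tauto

theorem exists_enters_of_walk {e : D.E} {a b : D.V} {X : Set D.V}
    (h : ReflTransGen (D.dstepAvoiding e) a b) (ha : a ∉ X) (hb : b ∈ X) :
    ∃ f, f ≠ e ∧ D.tail f ∉ X ∧ D.head f ∈ X := by
  induction h with
  | refl => exact absurd hb ha
  | @tail c _ _ step ih =>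
    obtain ⟨f, hfe, rfl, rfl⟩ := step
    by_cases hc : D.tail f ∈ X
    · exact ih hc
    · exact ⟨f, hfe, hc, hb⟩

namespace Deletable

variable {e : D.E}

theorem exists_meetsCutsEvenly_mem (he : D.Deletable e) : ∃ C, e ∈ C ∧ D.MeetsCutsEvenly C := by
  obtain ⟨T, heT, hT⟩ := exists_odd_ncard_inter_cutAt_iff_of_walk he.2
  refine ⟨T ∆ {e}, Set.mem_symmDiff.mpr (Or.inr ⟨rfl, heT⟩), fun X => ?_⟩
  rw [← Nat.not_odd_iff_even, Set.inter_symmDiff_distrib_right, Set.odd_ncard_symmDiff, hT X,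
    Set.odd_ncard_singleton_inter, mem_cutAt_iff]
  tauto

theorem exists_mem_cutAt_ne (he : D.Deletable e) {Y : Set D.V} (hY : (D.cutAt Y).Nonempty) :
    ∃ f ∈ D.cutAt Y, f ≠ e := by
  by_contra! hsub
  have hYe : D.cutAt Y = {e} := hY.subset_singleton_iff.mp hsub
  obtain ⟨C, heC, hC⟩ := he.exists_meetsCutsEvenly_mem
  have hodd : Odd (C ∩ D.cutAt Y).ncard := by
    rw [hYe, Set.inter_comm, Set.odd_ncard_singleton_inter]
    exact heC
  exact Nat.not_odd_iff_even.mpr (hC Y) hodd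

theorem exists_isOddDijoin_notMem (he : D.Deletable e) (hD : D.HasOddDijoin) : ∃ K, D.IsOddDijoin K ∧ e ∉ K := by
  obtain ⟨J, hJ⟩ := hD
  by_cases heJ : e ∈ J
  · obtain ⟨C, heC, hC⟩ := he.exists_meetsCutsEvenly_mem
    exact ⟨J ∆ C, hJ.symmDiff hC, fun h => by simp [Set.mem_symmDiff, heJ, heC] at h⟩
  · exact ⟨J, hJ, heJ⟩

end Deletable

theorem IsDirectedBond.of_deleteEdge {e : D.E} (he : D.Deletable e)
    {S' : Set (D.deleteEdge e).E} (h : (D.deleteEdge e).IsDirectedBond S') :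
    ∃ S, D.IsDirectedBond S ∧ S' = Subtype.val ⁻¹' S := by
  obtain ⟨hbond, hne, X, rfl, hdir⟩ := h
  have hcut : D.IsCut (D.cutAt X) :=
    ⟨(hne.image Subtype.val).mono (Set.image_preimage_subset _ _), X, rfl⟩
  refine ⟨D.cutAt X, ⟨isBond_of_isBond_preimage (D' := D.deleteEdge e) Subtype.val hcut hbond ?_, hcut.1, X, rfl, ?_⟩,
    rfl⟩
  · rintro C - ⟨hC, Y, rfl⟩
    obtain ⟨f, hf, hfe⟩ := he.exists_mem_cutAt_ne hC
    exact ⟨⟨⟨f, hfe⟩, hf⟩, Y, rfl⟩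
  · rintro f ⟨hft, hfh⟩
    by_cases hfe : f = e
    · subst hfe
      obtain ⟨g, hge, hg⟩ := exists_enters_of_walk he.2 hft hfh
      exact hdir ⟨g, hge⟩ hg
    · exact hdir ⟨f, hfe⟩ ⟨hft, hfh⟩

theorem HasOddDijoin.deleteEdge (hD : D.HasOddDijoin) {e : D.E} (he : D.Deletable e) :
    (D.deleteEdge e).HasOddDijoin := by
  obtain ⟨K, hK, heK⟩ := he.exists_isOddDijoin_notMem hD
  refine ⟨Subtype.val ⁻¹' K, hK.preimage Subtype.val_injective fun S' hS' => ?_⟩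
  obtain ⟨S, hS, rfl⟩ := hS'.of_deleteEdge he
  exact ⟨S, hS, rfl, fun f hf => ⟨⟨f, fun h => heK (h ▸ hf.1)⟩, rfl⟩⟩

def contractProj (D : MultiDigraph) (e : D.E) : D.V → (D.contract {e}).V :=
  Quotient.mk (EqvGen.setoid (D.touchRel {e}))

theorem contract_cutAt {e : D.E} (X : Set (D.contract {e}).V) :
    (D.contract {e}).cutAt X = Subtype.val ⁻¹' D.cutAt (D.contractProj e ⁻¹' X) :=
  rfl

theorem notMem_cutAt_preimage_contractProj (e : D.E) (X : Set (D.contract {e}).V) :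
    e ∉ D.cutAt (D.contractProj e ⁻¹' X) := by
  have hπ : D.contractProj e (D.tail e) = D.contractProj e (D.head e) :=
    Quot.sound (EqvGen.rel _ _ ⟨e, rfl, rfl, rfl⟩)
  simp [mem_cutAt_iff, hπ]

theorem preimage_image_contractProj {e : D.E} {Y : Set D.V} (hY : e ∉ D.cutAt Y) :
    D.contractProj e ⁻¹' (D.contractProj e '' Y) = Y := by
  refine Set.Subset.antisymm (fun w ⟨v, hv, hvw⟩ => ?_) (Set.subset_preimage_image _ _)
  have hsat : ∀ {v w}, EqvGen (D.touchRel {e}) v w → (v ∈ Y ↔ w ∈ Y) := by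
    intro v w h
    induction h with
    | rel _ _ h =>
      obtain ⟨f, rfl, rfl, rfl⟩ := h
      exact not_not.mp (mt mem_cutAt_iff.mpr hY)
    | refl => exact Iff.rfl
    | symm _ _ _ ih => exact ih.symm
    | trans _ _ _ _ _ ih₁ ih₂ => exact ih₁.trans ih₂
  exact (hsat (Quotient.exact hvw)).mp hv

theorem IsDirectedBond.of_contract {e : D.E} {S' : Set (D.contract {e}).E}
    (h : (D.contract {e}).IsDirectedBond S') :
    ∃ S, D.IsDirectedBond S ∧ S' = Subtype.val ⁻¹' S ∧ e ∉ S := by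
  obtain ⟨hbond, hne, X, rfl, hdir⟩ := h
  have heS := notMem_cutAt_preimage_contractProj e X
  have hcut : D.IsCut (D.cutAt (D.contractProj e ⁻¹' X)) :=
    ⟨(hne.image Subtype.val).mono (Set.image_preimage_subset _ _), _, rfl⟩
  refine ⟨_, ⟨isBond_of_isBond_preimage (D' := D.contract {e}) Subtype.val hcut hbond ?_,
    hcut.1, _, rfl, ?_⟩, rfl, heS⟩
  · rintro C hCS ⟨⟨f, hf⟩, Y, rfl⟩
    have hY : e ∉ D.cutAt Y := fun h => heS (hCS h)
    have hfe : f ∉ ({e} : Set D.E) := fun h => hY (Set.mem_singleton_iff.mp h ▸ hf)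
    refine ⟨⟨⟨f, hfe⟩, hf⟩, D.contractProj e '' Y, ?_⟩
    rw [contract_cutAt, preimage_image_contractProj hY]
    rfl
  · intro f hf
    by_cases hfe : f = e
    · subst hfe
      exact heS (Or.inr hf)
    · exact hdir ⟨f, hfe⟩ hf

theorem HasOddDijoin.contract (hD : D.HasOddDijoin) (e : D.E) :
    (D.contract {e}).HasOddDijoin := by
  obtain ⟨J, hJ⟩ := hD
  refine ⟨Subtype.val ⁻¹' J, hJ.preimage Subtype.val_injective fun S' hS' => ?_⟩
  obtain ⟨S, hS, rfl, heS⟩ := hS'.of_contract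
  exact ⟨S, hS, rfl, fun f hf => ⟨⟨f, fun h => heS (Set.mem_singleton_iff.mp h ▸ hf.2)⟩, rfl⟩⟩

theorem deleteVertex_cutAt_preimage {v : D.V} (hv : D.Isolated v) (Y : Set D.V) :
    (D.deleteVertex v hv).cutAt (Subtype.val ⁻¹' Y) = D.cutAt Y :=
  rfl

theorem IsDirectedBond.of_deleteVertex {v : D.V} {hv : D.Isolated v}
    {S : Set (D.deleteVertex v hv).E} (h : (D.deleteVertex v hv).IsDirectedBond S) :
    D.IsDirectedBond S := by
  obtain ⟨hbond, hne, X, rfl, hdir⟩ := h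
  have hX : (D.deleteVertex v hv).cutAt X = D.cutAt (Subtype.val '' X) := by
    conv_lhs => rw [← Set.preimage_image_eq X Subtype.val_injective]
    exact deleteVertex_cutAt_preimage hv _
  have hcut : D.IsCut ((D.deleteVertex v hv).cutAt X) := ⟨hne, _, hX⟩
  refine ⟨isBond_of_isBond_preimage (D := D) (D' := D.deleteVertex v hv) id hcut hbond ?_, hne, _, hX, ?_⟩
  · rintro C - ⟨hC, Y, rfl⟩
    exact ⟨hC, _, (deleteVertex_cutAt_preimage hv Y).symm⟩
  · rintro f ⟨hft, hfh⟩
    exact hdir f ⟨fun h => hft (Set.mem_image_of_mem _ h), Subtype.val_injective.mem_set_image.mp hfh⟩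

theorem HasOddDijoin.deleteVertex (hD : D.HasOddDijoin) {v : D.V} (hv : D.Isolated v) :
    (D.deleteVertex v hv).HasOddDijoin := by
  obtain ⟨J, hJ⟩ := hD
  exact ⟨J, fun S hS => hJ S hS.of_deleteVertex⟩

theorem HasOddDijoin.of_cutMinorStep (h : CutMinorStep D' D) (hD : D.HasOddDijoin) :
    D'.HasOddDijoin := by
  cases h with
  | contractEdge D e => exact hD.contract e
  | delEdge D e he => exact hD.deleteEdge he
  | delVertex D v hv => exact hD.deleteVertex hv

end MultiDigraph

theorem stmt5 (D₁ D₂ : MultiDigraph) (h : IsCutMinor D₁ D₂) (hd : D₂.HasOddDijoin) :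
    D₁.HasOddDijoin := by
  induction h with
  | refl => exact hd
  | tail _ step ih => exact ih (hd.of_cutMinorStep step)
end

section
/- Let D be a weakly connected acyclic digraph with underlying multigraph G. Then the cut space of G admits a basis 𝓑 whose elements are the edge sets of minimal directed cuts of D. Moreover, if A ⊆ E(D) is a set of edges such that D/A is acyclic and G[A] is a forest, then 𝓑 can be chosen so that every edge e ∈ A appears in exactly one cut of 𝓑. -/
open Relation

/-!
If no edge enters `X`, the cut of `X` is directed, and splitting it along a smaller cut `δY`
(into the cuts of `X ∩ Y` and `X ∩ Yᶜ`, or of `X ∪ Y` and `X ∪ Yᶜ`) gives two cuts of the same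
kind; so it is a disjoint union of directed bonds. Since the coboundary map `𝔽₂^V → 𝔽₂^E` sends
`1_X` to `1_{δX}`, in-closed vertex sets spanning `𝔽₂^V` yield directed bonds spanning the cut
space, and a basis can be extracted from them. In an acyclic digraph the in-closed sets span,
as `1_{v} = 1_{↓v} - 1_{↓v \ {v}}`.

For the refinement take the preimages of the in-closed sets of `D/A`, whose cuts avoid `A`, and
for each `a ∈ A` the set of vertices from which `tail a` is reached along edges outside `A`
forwards and edges of `A \ {a}` either way. Acyclicity of `D/A` and the forest condition make `a`
the only edge of `A` in its cut, so subtracting multiples of these sets makes any vertex function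
constant on the components of `A`; hence all these sets together span. Every edge of `A` then lies
in exactly one of the bonds obtained, the bonds meeting `A` are linearly independent (each has a
coordinate of its own), and the basis is extracted around them.
-/

section

variable {α : Type}

lemma eindicator_injective : Function.Injective (eindicator (α := α)) :=
  fun _ _ h => Set.indicator_one_inj (ZMod 2) h

lemma eindicator_sUnion_mem_span [Finite α] {𝒞 : Set (Set α)} (h𝒞 : 𝒞.PairwiseDisjoint id) :
    eindicator (⋃₀ 𝒞) ∈ Submodule.span (ZMod 2) (eindicator '' 𝒞) := by
  classical
  have hfin := Set.toFinite 𝒞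
  have hsum : eindicator (⋃₀ 𝒞) = ∑ S ∈ hfin.toFinset, eindicator S := by
    have := Finset.indicator_biUnion hfin.toFinset id (f := (1 : α → ZMod 2))
      (by simpa using h𝒞)
    rw [eindicator, Set.sUnion_eq_biUnion]
    simp only [Set.Finite.mem_toFinset, id] at this
    rw [this]
    funext x
    simp [eindicator, Finset.sum_apply]
  rw [hsum]
  exact Submodule.sum_mem _ fun S hS =>
    Submodule.subset_span ⟨S, hfin.mem_toFinset.mp hS, rfl⟩

lemma linearIndepOn_eindicator_of_exists_private {𝒮 : Set (Set α)}
    (h : ∀ S ∈ 𝒮, ∃ e ∈ S, ∀ S' ∈ 𝒮, e ∈ S' → S' = S) :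
    LinearIndepOn (ZMod 2) eindicator 𝒮 := by
  classical
  rw [LinearIndepOn, linearIndependent_iff']
  intro s g hg S hS
  obtain ⟨e, heS, hpriv⟩ := h S S.2
  have he := congrFun hg e
  rw [Finset.sum_apply, Finset.sum_eq_single S] at he
  · simpa [eindicator, heS] using he
  · intro S' _ hS'
    have : e ∉ (S' : Set α) := fun he' => hS' (Subtype.ext (hpriv S' S'.2 he'))
    simp [eindicator, this]
  · exact fun h => absurd hS h

lemma exists_linearIndepOn_eindicator_of_existsUnique {𝒯 : Set (Set α)} {A : Set α}
    (hA : ∀ e ∈ A, ∃! S, S ∈ 𝒯 ∧ e ∈ S) :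
    ∃ ℬ ⊆ 𝒯, LinearIndepOn (ZMod 2) eindicator ℬ ∧
      Submodule.span (ZMod 2) (eindicator '' ℬ) = Submodule.span (ZMod 2) (eindicator '' 𝒯) ∧
      ∀ e ∈ A, ∃! S, S ∈ ℬ ∧ e ∈ S := by
  set 𝒮 := {S ∈ 𝒯 | ∃ e ∈ A, e ∈ S}
  have h𝒮 : LinearIndepOn (ZMod 2) eindicator 𝒮 := by
    refine linearIndepOn_eindicator_of_exists_private fun S ⟨_, e, heA, heS⟩ => ⟨e, heS, ?_⟩
    exact fun S' hS' heS' => (hA e heA).unique ⟨hS'.1, heS'⟩ ⟨‹S ∈ 𝒯›, heS⟩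
  obtain ⟨b, hb𝒯, h𝒮b, h𝒯b, hb⟩ := exists_linearIndepOn_id_extension
    ((linearIndepOn_iff_image eindicator_injective.injOn).mp h𝒮)
    (Set.image_mono (Set.sep_subset 𝒯 _))
  have himg : eindicator '' {S ∈ 𝒯 | eindicator S ∈ b} = b := by
    refine subset_antisymm (Set.image_subset_iff.mpr fun S hS => hS.2) fun x hx => ?_
    obtain ⟨S, hS, rfl⟩ := hb𝒯 hx
    exact ⟨S, ⟨hS, hx⟩, rfl⟩
  refine ⟨{S ∈ 𝒯 | eindicator S ∈ b}, Set.sep_subset _ _, ?_, ?_, ?_⟩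
  · rwa [linearIndepOn_iff_image eindicator_injective.injOn, himg]
  · rw [himg]
    exact le_antisymm (Submodule.span_mono hb𝒯) (Submodule.span_le.mpr h𝒯b)
  · intro e he
    obtain ⟨S, ⟨hS𝒯, heS⟩, huniq⟩ := hA e he
    refine ⟨S, ⟨⟨hS𝒯, h𝒮b ⟨S, ⟨hS𝒯, e, he, heS⟩, rfl⟩⟩, heS⟩, fun S' hS' => ?_⟩
    exact huniq S' ⟨hS'.1.1, hS'.2⟩

end

lemma SimpleGraph.reachable_fromRel_of_eqvGen {V : Type*} {r : V → V → Prop} {x y : V}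
    (h : EqvGen r x y) : (SimpleGraph.fromRel r).Reachable x y := by
  induction h with
  | rel x y hxy =>
    by_cases hxy' : x = y
    · exact hxy' ▸ .refl _
    · exact SimpleGraph.Adj.reachable ((SimpleGraph.fromRel_adj _ _ _).mpr ⟨hxy', .inl hxy⟩)
  | refl => exact .refl _
  | symm _ _ _ ih => exact ih.symm
  | trans _ _ _ _ _ ih₁ ih₂ => exact ih₁.trans ih₂

namespace MultiDigraph

variable {D : MultiDigraph} {A : Set D.E} {a : D.E}

noncomputable def incidence (D : MultiDigraph) : (D.V → ZMod 2) →ₗ[ZMod 2] (D.E → ZMod 2) :=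
  LinearMap.funLeft _ _ D.head - LinearMap.funLeft _ _ D.tail

lemma incidence_apply (y : D.V → ZMod 2) (e : D.E) :
    D.incidence y e = y (D.head e) - y (D.tail e) := rfl

lemma incidence_eindicator (X : Set D.V) : D.incidence (eindicator X) = eindicator (D.cutAt X) := by
  classical
  funext e
  simp only [incidence_apply, eindicator, Set.indicator_apply, cutAt, Set.mem_ofPred_eq,
    Pi.one_apply]
  split_ifs <;> simp_all

lemma cutAt_compl (X : Set D.V) : D.cutAt Xᶜ = D.cutAt X := by
  ext e
  simp only [cutAt, Set.mem_compl_iff, Set.mem_ofPred_eq, not_not]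
  tauto

def IsInClosed (X : Set D.V) : Prop := ∀ e, D.head e ∈ X → D.tail e ∈ X

namespace IsInClosed

variable {X Y : Set D.V}

lemma mem_cutAt_iff (hX : D.IsInClosed X) {e : D.E} :
    e ∈ D.cutAt X ↔ D.tail e ∈ X ∧ D.head e ∉ X := by
  have := hX e
  simp only [cutAt, Set.mem_ofPred_eq]
  tauto

lemma isDirectedCut (hX : D.IsInClosed X) (hne : (D.cutAt X).Nonempty) :
    D.IsDirectedCut (D.cutAt X) :=
  ⟨hne, X, rfl, fun e h => h.1 (hX e h.2)⟩

lemma inter (hX : D.IsInClosed X) (hY : D.cutAt Y ⊆ D.cutAt X) : D.IsInClosed (X ∩ Y) := by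
  intro e ⟨hhX, hhY⟩
  refine ⟨hX e hhX, by_contra fun htY => ?_⟩
  exact ((hX.mem_cutAt_iff).mp (hY (Or.inr ⟨htY, hhY⟩))).2 hhX

lemma cutAt_inter (hX : D.IsInClosed X) (hY : D.cutAt Y ⊆ D.cutAt X) :
    D.cutAt (X ∩ Y) = {e ∈ D.cutAt X | D.tail e ∈ Y} := by
  ext e
  rw [(hX.inter hY).mem_cutAt_iff, Set.mem_ofPred_eq, hX.mem_cutAt_iff]
  have h := mt (@hY e)
  simp only [cutAt, Set.mem_ofPred_eq, Set.mem_inter_iff] at h ⊢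
  have := hX e
  tauto

lemma union (hX : D.IsInClosed X) (hY : D.cutAt Y ⊆ D.cutAt X) : D.IsInClosed (X ∪ Y) := by
  rintro e (hhX | hhY)
  · exact Or.inl (hX e hhX)
  · by_contra ht
    simp only [Set.mem_union, not_or] at ht
    exact ht.1 ((hX.mem_cutAt_iff).mp (hY (Or.inr ⟨ht.2, hhY⟩))).1

lemma cutAt_union (hX : D.IsInClosed X) (hY : D.cutAt Y ⊆ D.cutAt X) :
    D.cutAt (X ∪ Y) = {e ∈ D.cutAt X | D.head e ∉ Y} := by
  ext e
  rw [(hX.union hY).mem_cutAt_iff, Set.mem_ofPred_eq, hX.mem_cutAt_iff]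
  have h := mt (@hY e)
  simp only [cutAt, Set.mem_ofPred_eq, Set.mem_union] at h ⊢
  have := hX e
  tauto

lemma exists_split (hX : D.IsInClosed X) (hne : (D.cutAt X).Nonempty)
    (hnb : ¬ D.IsBond (D.cutAt X)) :
    ∃ X₁ X₂, D.IsInClosed X₁ ∧ D.IsInClosed X₂ ∧ (D.cutAt X₁).Nonempty ∧
      D.cutAt X₁ ⊂ D.cutAt X ∧ D.cutAt X₂ = D.cutAt X \ D.cutAt X₁ := by
  obtain ⟨_, ⟨⟨e₀, he₀⟩, Y, rfl⟩, hYX, hne'⟩ : ∃ S, D.IsCut S ∧ S ⊆ D.cutAt X ∧ S ≠ D.cutAt X := by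
    simpa [IsBond, show D.IsCut (D.cutAt X) from ⟨hne, X, rfl⟩] using hnb
  obtain ⟨e₁, he₁X, he₁Y⟩ := Set.exists_of_ssubset (hYX.ssubset_of_ne hne')
  wlog ht₀ : D.tail e₀ ∈ Y generalizing Y
  · exact this Yᶜ (by rwa [cutAt_compl]) (by rwa [cutAt_compl]) (by rwa [cutAt_compl])
      (by rwa [cutAt_compl]) ht₀
  have hYcX : D.cutAt Yᶜ ⊆ D.cutAt X := by rwa [cutAt_compl]
  have hh₀ : D.head e₀ ∉ Y := by simp_all [cutAt]
  by_cases ht₁ : D.tail e₁ ∈ Y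
  · have hh₁ : D.head e₁ ∈ Y := by by_contra h; exact he₁Y (Or.inl ⟨ht₁, h⟩)
    refine ⟨X ∪ Yᶜ, X ∪ Y, hX.union hYcX, hX.union hYX, ?_, ?_, ?_⟩
    all_goals simp only [hX.cutAt_union hYX, hX.cutAt_union hYcX]
    · exact ⟨e₁, he₁X, not_not.mpr hh₁⟩
    · exact Set.ssubset_iff_exists.mpr ⟨Set.sep_subset _ _, e₀, hYX he₀, fun h => h.2 hh₀⟩
    · ext; simp
  · refine ⟨X ∩ Y, X ∩ Yᶜ, hX.inter hYX, hX.inter hYcX, ?_, ?_, ?_⟩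
    all_goals simp only [hX.cutAt_inter hYX, hX.cutAt_inter hYcX]
    · exact ⟨e₀, hYX he₀, ht₀⟩
    · exact Set.ssubset_iff_exists.mpr ⟨Set.sep_subset _ _, e₁, he₁X, fun h => ht₁ h.2⟩
    · ext; simp

theorem exists_directedBond_partition (hX : D.IsInClosed X) :
    ∃ 𝒞 : Set (Set D.E), (∀ B ∈ 𝒞, D.IsDirectedBond B) ∧ 𝒞.PairwiseDisjoint id ∧
      ⋃₀ 𝒞 = D.cutAt X := by
  induction hn : (D.cutAt X).ncard using Nat.strong_induction_on generalizing X with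
  | _ n ih =>
  rcases (D.cutAt X).eq_empty_or_nonempty with hemp | hne
  · exact ⟨∅, by simp, Set.pairwiseDisjoint_empty, by simp [hemp]⟩
  by_cases hbond : D.IsBond (D.cutAt X)
  · exact ⟨{D.cutAt X}, by simpa using ⟨hbond, hX.isDirectedCut hne⟩,
      Set.pairwiseDisjoint_singleton _ _, Set.sUnion_singleton _⟩
  obtain ⟨X₁, X₂, hX₁, hX₂, hne₁, hss₁, hX₂eq⟩ := hX.exists_split hne hbond
  obtain ⟨𝒞₁, hbond₁, hdisj₁, hunion₁⟩ :=
    ih _ (hn ▸ Set.ncard_lt_ncard hss₁) hX₁ rfl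
  obtain ⟨𝒞₂, hbond₂, hdisj₂, hunion₂⟩ :=
    ih _ (hn ▸ hX₂eq ▸ Set.ncard_lt_ncard (Set.sdiff_ssubset_left_iff.mpr
      (by rwa [Set.inter_eq_right.mpr hss₁.subset]))) hX₂ rfl
  refine ⟨𝒞₁ ∪ 𝒞₂, ?_, ?_, ?_⟩
  · rintro B (hB | hB)
    exacts [hbond₁ B hB, hbond₂ B hB]
  · refine Set.pairwiseDisjoint_union.mpr ⟨hdisj₁, hdisj₂, fun B₁ hB₁ B₂ hB₂ _ => ?_⟩
    have h₁ : B₁ ⊆ D.cutAt X₁ := hunion₁ ▸ Set.subset_sUnion_of_mem hB₁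
    have h₂ : B₂ ⊆ D.cutAt X₂ := hunion₂ ▸ Set.subset_sUnion_of_mem hB₂
    rw [hX₂eq] at h₂
    exact Set.disjoint_of_subset h₁ h₂ Set.disjoint_sdiff_right
  · rw [Set.sUnion_union, hunion₁, hunion₂, hX₂eq, Set.union_sdiff_cancel hss₁.subset]

end IsInClosed

lemma cutSpace_le_span_cutAt {𝒱 : Set (Set D.V)}
    (h𝒱 : Submodule.span (ZMod 2) (eindicator '' 𝒱) = ⊤) :
    D.cutSpace ≤ Submodule.span (ZMod 2) (eindicator '' (D.cutAt '' 𝒱)) := by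
  refine Submodule.span_le.mpr ?_
  rintro _ ⟨S, ⟨⟨-, Y, rfl⟩, -⟩, rfl⟩
  have hY := Submodule.mem_map_of_mem (f := D.incidence)
    (h𝒱 ▸ Submodule.mem_top : eindicator Y ∈ Submodule.span (ZMod 2) (eindicator '' 𝒱))
  rw [Submodule.map_span, Set.image_image] at hY
  simpa only [incidence_eindicator, Set.image_image, SetLike.mem_coe] using hY

theorem exists_directedBond_cutSpaceBasis_of_span_eq_top {𝒱 : Set (Set D.V)}
    (h𝒱 : ∀ X ∈ 𝒱, D.IsInClosed X) (hspan : Submodule.span (ZMod 2) (eindicator '' 𝒱) = ⊤)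
    (hA : ∀ e ∈ A, ∃! S, S ∈ D.cutAt '' 𝒱 ∧ e ∈ S) :
    ∃ ℬ, D.IsCutSpaceBasis ℬ ∧ (∀ S ∈ ℬ, D.IsDirectedBond S) ∧ ∀ e ∈ A, ∃! S, S ∈ ℬ ∧ e ∈ S := by
  have hpart : ∀ S ∈ D.cutAt '' 𝒱, ∃ 𝒞 : Set (Set D.E), (∀ B ∈ 𝒞, D.IsDirectedBond B) ∧
      𝒞.PairwiseDisjoint id ∧ ⋃₀ 𝒞 = S := by
    rintro _ ⟨X, hX, rfl⟩
    exact (h𝒱 X hX).exists_directedBond_partition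
  choose 𝒞 hbond hdisj hunion using hpart
  set 𝒯 := {B | ∃ S hS, B ∈ 𝒞 S hS}
  have h𝒯bond : ∀ B ∈ 𝒯, D.IsDirectedBond B := by
    rintro B ⟨S, hS, hB⟩
    exact hbond S hS B hB
  have h𝒯span : Submodule.span (ZMod 2) (eindicator '' 𝒯) = D.cutSpace := by
    refine le_antisymm (Submodule.span_le.mpr ?_)
      ((cutSpace_le_span_cutAt hspan).trans (Submodule.span_le.mpr ?_))
    · rintro _ ⟨B, hB, rfl⟩
      exact Submodule.subset_span ⟨B, (h𝒯bond B hB).1, rfl⟩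
    · rintro _ ⟨S, hS, rfl⟩
      rw [← hunion S hS]
      exact Submodule.span_mono (Set.image_mono fun B hB => show B ∈ 𝒯 from ⟨S, hS, hB⟩)
        (eindicator_sUnion_mem_span (hdisj S hS))
  have h𝒯A : ∀ e ∈ A, ∃! B, B ∈ 𝒯 ∧ e ∈ B := by
    intro e he
    obtain ⟨S, ⟨hS, heS⟩, huniq⟩ := hA e he
    obtain ⟨B, hB, heB⟩ := Set.mem_sUnion.mp ((hunion S hS).symm ▸ heS)
    refine ⟨B, ⟨⟨S, hS, hB⟩, heB⟩, ?_⟩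
    rintro B' ⟨⟨S', hS', hB'⟩, heB'⟩
    have hS'S := huniq S' ⟨hS', hunion S' hS' ▸ Set.subset_sUnion_of_mem hB' heB'⟩
    subst hS'S
    by_contra hne
    exact Set.disjoint_left.mp (hdisj S' hS' hB' hB hne) heB' heB
  obtain ⟨ℬ, hℬ𝒯, hli, hℬspan, hℬA⟩ := exists_linearIndepOn_eindicator_of_existsUnique h𝒯A
  exact ⟨ℬ, ⟨hli, hℬspan.trans h𝒯span⟩, fun B hB => h𝒯bond B (hℬ𝒯 hB), hℬA⟩

lemma isInClosed_setOf_reflTransGen (v : D.V) : D.IsInClosed {w | ReflTransGen D.dstep w v} :=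
  fun e he => ReflTransGen.head ⟨e, rfl, rfl⟩ he

lemma Acyclic.isInClosed_setOf_reflTransGen_diff (h : D.Acyclic) (v : D.V) :
    D.IsInClosed ({w | ReflTransGen D.dstep w v} \ {v}) := by
  rintro e ⟨he, -⟩
  refine ⟨ReflTransGen.head ⟨e, rfl, rfl⟩ he, fun htv => ?_⟩
  rw [Set.mem_singleton_iff] at htv
  exact h _ _ ⟨e, rfl, rfl⟩ (htv ▸ he)

theorem Acyclic.span_eindicator_isInClosed (h : D.Acyclic) :
    Submodule.span (ZMod 2) (eindicator '' {X | D.IsInClosed X}) = ⊤ := by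
  classical
  refine eq_top_iff.mpr fun y _ => ?_
  rw [pi_eq_sum_univ' y]
  refine Submodule.sum_mem _ fun v _ => Submodule.smul_mem _ _ ?_
  set P := {w | ReflTransGen D.dstep w v}
  have hsingle : Pi.single v 1 = eindicator P - eindicator (P \ {v}) := by
    rw [eindicator, eindicator, Set.indicator_sdiff (Set.singleton_subset_iff.mpr .refl),
      sub_sub_cancel, Set.indicator_singleton, Pi.one_apply]
  rw [hsingle]
  exact Submodule.sub_mem _ (Submodule.subset_span ⟨P, isInClosed_setOf_reflTransGen v, rfl⟩)
    (Submodule.subset_span ⟨_, h.isInClosed_setOf_reflTransGen_diff v, rfl⟩)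

noncomputable def contractMap (A : Set D.E) : D.V → (D.contract A).V :=
  Quotient.mk (EqvGen.setoid (D.touchRel A))

lemma contractMap_tail_eq_head {e : D.E} (he : e ∈ A) :
    D.contractMap A (D.tail e) = D.contractMap A (D.head e) :=
  Quotient.sound (EqvGen.rel _ _ ⟨e, he, rfl, rfl⟩)

lemma dstep_contractMap {e : D.E} (he : e ∉ A) :
    (D.contract A).dstep (D.contractMap A (D.tail e)) (D.contractMap A (D.head e)) :=
  ⟨⟨e, he⟩, rfl, rfl⟩

lemma IsInClosed.preimage_contractMap {U : Set (D.contract A).V}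
    (hU : (D.contract A).IsInClosed U) : D.IsInClosed (D.contractMap A ⁻¹' U) := by
  intro e he
  by_cases heA : e ∈ A
  · rwa [Set.mem_preimage, contractMap_tail_eq_head heA]
  · exact hU ⟨e, heA⟩ he

lemma notMem_cutAt_preimage_contractMap {e : D.E} (he : e ∈ A) (U : Set (D.contract A).V) :
    e ∉ D.cutAt (D.contractMap A ⁻¹' U) := by
  simp [cutAt, contractMap_tail_eq_head he]

lemma exists_eq_comp_contractMap {β : Type*} {y : D.V → β}
    (hy : ∀ e ∈ A, y (D.tail e) = y (D.head e)) :
    ∃ y₀ : (D.contract A).V → β, y = y₀ ∘ D.contractMap A := by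
  refine ⟨Quotient.lift y fun x x' (hx : EqvGen _ x x') => ?_, rfl⟩
  induction hx with
  | rel x z hxz => obtain ⟨e, he, rfl, rfl⟩ := hxz; exact hy e he
  | refl => rfl
  | symm _ _ _ ih => exact ih.symm
  | trans _ _ _ _ _ ih₁ ih₂ => exact ih₁.trans ih₂

def Joins (e : D.E) (x y : D.V) : Prop :=
  (D.tail e = x ∧ D.head e = y) ∨ (D.tail e = y ∧ D.head e = x)

lemma Joins.eq_or_eq_swap {e : D.E} {x y x' y' : D.V} (h : D.Joins e x y) (h' : D.Joins e x' y') :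
    (x = x' ∧ y = y') ∨ (x = y' ∧ y = x') := by
  unfold Joins at h h'
  grind

lemma exists_isSignedCycle_of_closedPath {k : ℕ} (v : ℕ → D.V) (ed : ℕ → D.E)
    (hv : Set.InjOn v (Set.Iic k)) (hed : Set.InjOn ed (Set.Iic k))
    (hjoin : ∀ i ≤ k, D.Joins (ed i) (v i) (v ((i + 1) % (k + 1)))) :
    ∃ X, D.IsSignedCycle X ∧ ∀ f, X f ≠ 0 → ∃ i ≤ k, ed i = f := by
  have hle (i : ZMod (k + 1)) : i.val ≤ k := Nat.lt_succ_iff.mp (ZMod.val_lt i)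
  have hsucc (i : ZMod (k + 1)) : (i + 1).val = (i.val + 1) % (k + 1) := by
    rw [← ZMod.val_natCast]
    simp
  set ed' : ZMod (k + 1) → D.E := fun i => ed i.val
  have hed' : Function.Injective ed' := fun i j h => ZMod.val_injective _ (hed (hle i) (hle j) h)
  set dir : ZMod (k + 1) → Bool := fun i => decide (D.tail (ed' i) = v i.val)
  refine ⟨Function.extend ed' (fun i => if dir i then 1 else -1) 0,
    ⟨k + 1, k.succ_pos, fun i => v i.val, ed', dir,
      fun i j h => ZMod.val_injective _ (hv (hle i) (hle j) h), hed', fun i => ?_,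
      fun i => hed'.extend_apply _ _ i,
      fun f hf => Function.extend_apply' _ _ _ (not_exists.mpr hf)⟩, fun f hf => ?_⟩
  · have hj := hjoin i.val (hle i)
    rw [← hsucc] at hj
    unfold Joins at hj
    simp only [dir, ed', decide_eq_true_eq, decide_eq_false_iff_not]
    grind
  · by_contra hnot
    exact hf (Function.extend_apply' _ _ _ fun ⟨i, hi⟩ => hnot ⟨i.val, hle i, hi⟩)

lemma injOn_Iio_of_joins {k : ℕ} {v : ℕ → D.V} {ed : ℕ → D.E} (hv : Set.InjOn v (Set.Iic k))
    (hjoin : ∀ i < k, D.Joins (ed i) (v i) (v (i + 1))) : Set.InjOn ed (Set.Iio k) := by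
  intro i hi j hj hij
  simp only [Set.mem_Iio] at hi hj
  rcases (hjoin i hi).eq_or_eq_swap (hij ▸ hjoin j hj) with ⟨h, -⟩ | ⟨h₁, h₂⟩
  · exact hv hi.le hj.le h
  · have := hv (Set.mem_Iic.mpr hi.le) (Set.mem_Iic.mpr (show j + 1 ≤ k by omega)) h₁
    have := hv (Set.mem_Iic.mpr (show i + 1 ≤ k by omega)) (Set.mem_Iic.mpr hj.le) h₂
    omega

lemma IsForestOn.not_eqvGen (hA : D.IsForestOn A) (ha : a ∈ A) :
    ¬ EqvGen (D.touchRel (A \ {a})) (D.tail a) (D.head a) := by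
  intro h
  obtain ⟨p, hp⟩ := (SimpleGraph.reachable_fromRel_of_eqvGen h).exists_isPath
  have hedge (i : ℕ) (hi : i < p.length) :
      ∃ e ∈ A \ {a}, D.Joins e (p.getVert i) (p.getVert (i + 1)) := by
    obtain ⟨-, ⟨e, he, h⟩ | ⟨e, he, h⟩⟩ :=
      (SimpleGraph.fromRel_adj _ _ _).mp (p.adj_getVert_succ hi)
    exacts [⟨e, he, .inl h⟩, ⟨e, he, .inr h⟩]
  choose ed hedA hedJ using hedge
  set ed' : ℕ → D.E := fun i => if h : i < p.length then ed i h else a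
  have hedA' (i : ℕ) (hi : i < p.length) : ed' i ∈ A \ {a} := by simpa [ed', hi] using hedA i hi
  have hedJ' (i : ℕ) (hi : i < p.length) : D.Joins (ed' i) (p.getVert i) (p.getVert (i + 1)) := by
    simpa [ed', hi] using hedJ i hi
  have hinj : Set.InjOn ed' (Set.Iic p.length) := by
    rw [← Set.Iio_insert, Set.injOn_insert Set.self_notMem_Iio]
    refine ⟨injOn_Iio_of_joins hp.getVert_injOn hedJ', fun ⟨i, hi, hia⟩ => ?_⟩
    exact (hedA' i hi).2 (hia.trans (by simp [ed']))
  have hjoin (i : ℕ) (hi : i ≤ p.length) :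
      D.Joins (ed' i) (p.getVert i) (p.getVert ((i + 1) % (p.length + 1))) := by
    rcases hi.lt_or_eq with hi | rfl
    · simpa [Nat.mod_eq_of_lt (Nat.succ_lt_succ hi)] using hedJ' i hi
    · simp [ed', Joins]
  obtain ⟨X, hX, hXsupp⟩ :=
    exists_isSignedCycle_of_closedPath p.getVert ed' hp.getVert_injOn hinj hjoin
  refine hA ⟨X, hX, fun f hf => ?_⟩
  obtain ⟨i, -, rfl⟩ := hXsupp f hf
  by_cases hi : i < p.length
  · exact (hedA' i hi).1
  · simpa [ed', hi] using ha

def fundamentalStep (A : Set D.E) (a : D.E) (x y : D.V) : Prop :=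
  ∃ e ≠ a, (D.tail e = x ∧ D.head e = y) ∨ (e ∈ A ∧ D.tail e = y ∧ D.head e = x)

def fundamentalSet (A : Set D.E) (a : D.E) : Set D.V :=
  {w | ReflTransGen (D.fundamentalStep A a) w (D.tail a)}

lemma isInClosed_fundamentalSet : D.IsInClosed (D.fundamentalSet A a) := by
  intro e he
  by_cases hea : e = a
  · exact hea ▸ ReflTransGen.refl
  · exact ReflTransGen.head ⟨e, hea, Or.inl ⟨rfl, rfl⟩⟩ he

lemma notMem_cutAt_fundamentalSet {b : D.E} (hb : b ∈ A) (hba : b ≠ a) :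
    b ∉ D.cutAt (D.fundamentalSet A a) := by
  have h₁ : D.tail b ∈ D.fundamentalSet A a → D.head b ∈ D.fundamentalSet A a :=
    ReflTransGen.head ⟨b, hba, Or.inr ⟨hb, rfl, rfl⟩⟩
  have h₂ := isInClosed_fundamentalSet (D := D) (A := A) (a := a) b
  simp only [cutAt, Set.mem_ofPred_eq]
  tauto

lemma eqvGen_or_transGen_of_reflTransGen_fundamentalStep {w v : D.V}
    (h : ReflTransGen (D.fundamentalStep A a) w v) :
    EqvGen (D.touchRel (A \ {a})) w v ∨
      TransGen (D.contract A).dstep (D.contractMap A w) (D.contractMap A v) := by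
  induction h with
  | refl => exact Or.inl (EqvGen.refl _)
  | @tail u v _ huv ih =>
    obtain ⟨e, hea, hdir⟩ := huv
    by_cases heA : e ∈ A
    · have hq := contractMap_tail_eq_head (A := A) heA
      have huv : EqvGen (D.touchRel (A \ {a})) u v := by
        rcases hdir with ⟨rfl, rfl⟩ | ⟨-, rfl, rfl⟩
        · exact EqvGen.rel _ _ ⟨e, ⟨heA, hea⟩, rfl, rfl⟩
        · exact EqvGen.symm _ _ (EqvGen.rel _ _ ⟨e, ⟨heA, hea⟩, rfl, rfl⟩)
      have hquv : D.contractMap A u = D.contractMap A v := by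
        rcases hdir with ⟨rfl, rfl⟩ | ⟨-, rfl, rfl⟩
        exacts [hq, hq.symm]
      exact ih.imp (fun h => h.trans _ _ _ huv) (fun h => hquv ▸ h)
    · obtain ⟨rfl, rfl⟩ : D.tail e = u ∧ D.head e = v := hdir.resolve_right fun h => heA h.1
      refine .inr (ih.elim (fun h => .single ?_) fun h => h.tail (dstep_contractMap heA))
      have hwu : D.contractMap A w = D.contractMap A (D.tail e) :=
        Quotient.sound (EqvGen.mono (fun x y ⟨f, hf, hxy⟩ => ⟨f, hf.1, hxy⟩) _ _ h)
      exact hwu ▸ dstep_contractMap heA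

lemma mem_cutAt_fundamentalSet_iff (hacyc : (D.contract A).Acyclic) (ha : a ∈ A)
    (hforest : ¬ EqvGen (D.touchRel (A \ {a})) (D.tail a) (D.head a)) {b : D.E} (hb : b ∈ A) :
    b ∈ D.cutAt (D.fundamentalSet A a) ↔ b = a := by
  refine ⟨fun h => by_contra fun hba => notMem_cutAt_fundamentalSet hb hba h, ?_⟩
  rintro rfl
  refine Or.inl ⟨ReflTransGen.refl, fun h => ?_⟩
  rcases eqvGen_or_transGen_of_reflTransGen_fundamentalStep h with h | h
  · exact hforest (EqvGen.symm _ _ h)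
  · rw [contractMap_tail_eq_head ha] at h
    obtain ⟨c, hc, hcb⟩ := TransGen.head'_iff.mp h
    exact hacyc _ _ hc hcb

lemma span_eindicator_preimage_contractMap_union_eq_top (hacyc : (D.contract A).Acyclic)
    {X : D.E → Set D.V} (hX : ∀ a ∈ A, ∀ b ∈ A, b ∈ D.cutAt (X a) ↔ b = a) :
    Submodule.span (ZMod 2) (eindicator ''
      ((D.contractMap A ⁻¹' ·) '' {U | (D.contract A).IsInClosed U} ∪ X '' A)) = ⊤ := by
  classical
  set W := Submodule.span (ZMod 2) (eindicator ''
      ((D.contractMap A ⁻¹' ·) '' {U | (D.contract A).IsInClosed U} ∪ X '' A))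
  refine eq_top_iff.mpr fun y _ => ?_
  set z := y - ∑ a ∈ A.toFinset, D.incidence y a • eindicator (X a)
  have hz : ∀ b ∈ A, z (D.tail b) = z (D.head b) := by
    intro b hb
    have hzb : D.incidence z b = 0 := by
      simp only [z, map_sub, map_sum, map_smul, incidence_eindicator, Pi.sub_apply,
        Finset.sum_apply, Pi.smul_apply]
      rw [Finset.sum_eq_single b]
      · simp [eindicator, (hX b hb b hb).mpr rfl]
      · intro a ha hab
        simp [eindicator, hX a (Set.mem_toFinset.mp ha) b hb, Ne.symm hab]
      · simp [hb]
    rw [incidence_apply, sub_eq_zero] at hzb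
    exact hzb.symm
  obtain ⟨z₀, hz₀⟩ := exists_eq_comp_contractMap hz
  have hzW : z ∈ W := by
    have hz₀' :=
      Submodule.mem_map_of_mem (f := LinearMap.funLeft (ZMod 2) (ZMod 2) (D.contractMap A))
      (hacyc.span_eindicator_isInClosed ▸ Submodule.mem_top :
        z₀ ∈ Submodule.span (ZMod 2) (eindicator '' {U | (D.contract A).IsInClosed U}))
    rw [Submodule.map_span, Set.image_image] at hz₀'
    refine hz₀ ▸ Submodule.span_mono ?_ hz₀'
    rintro _ ⟨U, hU, rfl⟩
    refine ⟨_, Or.inl ⟨U, hU, rfl⟩, ?_⟩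
    funext v
    simp [eindicator, Set.indicator_apply, LinearMap.funLeft_apply]
  have hsumW : ∑ a ∈ A.toFinset, D.incidence y a • eindicator (X a) ∈ W :=
    Submodule.sum_mem _ fun a ha => Submodule.smul_mem _ _
      (Submodule.subset_span ⟨X a, Or.inr ⟨a, Set.mem_toFinset.mp ha, rfl⟩, rfl⟩)
  simpa [z] using Submodule.add_mem _ hzW hsumW

theorem exists_directedBond_cutSpaceBasis_of_isForestOn (hacyc : (D.contract A).Acyclic)
    (hforest : D.IsForestOn A) :
    ∃ ℬ, D.IsCutSpaceBasis ℬ ∧ (∀ S ∈ ℬ, D.IsDirectedBond S) ∧ ∀ e ∈ A, ∃! S, S ∈ ℬ ∧ e ∈ S := by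
  have hcut : ∀ a ∈ A, ∀ b ∈ A, b ∈ D.cutAt (D.fundamentalSet A a) ↔ b = a :=
    fun a ha b hb => mem_cutAt_fundamentalSet_iff hacyc ha (hforest.not_eqvGen ha) hb
  refine exists_directedBond_cutSpaceBasis_of_span_eq_top ?_
    (span_eindicator_preimage_contractMap_union_eq_top hacyc hcut) fun e he => ?_
  · rintro _ (⟨U, hU, rfl⟩ | ⟨a, -, rfl⟩)
    exacts [hU.preimage_contractMap, isInClosed_fundamentalSet]
  refine ⟨_, ⟨⟨_, Or.inr ⟨e, he, rfl⟩, rfl⟩, (hcut e he e he).mpr rfl⟩, ?_⟩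
  rintro _ ⟨⟨_, ⟨U, -, rfl⟩ | ⟨a, ha, rfl⟩, rfl⟩, heS⟩
  · exact absurd heS (notMem_cutAt_preimage_contractMap he U)
  · rw [(hcut a ha e he).mp heS]

end MultiDigraph

theorem stmt6_general (D : MultiDigraph) (hacyclic : D.Acyclic) :
    (∃ ℬ : Set (Set D.E), D.IsCutSpaceBasis ℬ ∧ ∀ S ∈ ℬ, D.IsDirectedBond S) ∧
      ∀ A : Set D.E, (D.contract A).Acyclic → D.IsForestOn A →
        ∃ ℬ : Set (Set D.E), D.IsCutSpaceBasis ℬ ∧ (∀ S ∈ ℬ, D.IsDirectedBond S) ∧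
          ∀ e ∈ A, ∃! S : Set D.E, S ∈ ℬ ∧ e ∈ S := by
  refine ⟨?_, fun A hA hforest =>
    MultiDigraph.exists_directedBond_cutSpaceBasis_of_isForestOn hA hforest⟩
  obtain ⟨ℬ, hℬ, hbond, -⟩ := MultiDigraph.exists_directedBond_cutSpaceBasis_of_span_eq_top
    (fun _ hX => hX) hacyclic.span_eindicator_isInClosed (A := ∅) (by simp)
  exact ⟨ℬ, hℬ, hbond⟩

theorem stmt6 (D : MultiDigraph) (hconn : D.WeaklyConnected) (hacyclic : D.Acyclic) :
    (∃ ℬ : Set (Set D.E), D.IsCutSpaceBasis ℬ ∧ ∀ S ∈ ℬ, D.IsDirectedBond S) ∧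
      ∀ A : Set D.E, (D.contract A).Acyclic → D.IsForestOn A →
        ∃ ℬ : Set (Set D.E), D.IsCutSpaceBasis ℬ ∧ (∀ S ∈ ℬ, D.IsDirectedBond S) ∧
          ∀ e ∈ A, ∃! S : Set D.E, S ∈ ℬ ∧ e ∈ S :=
  stmt6_general D hacyclic
end

section
/- Let E be a finite set and 𝓕 a family of subsets of E. Then exactly one of the following statements holds: (i) there is a subset J ⊆ E such that |F ∩ J| is odd for every F ∈ 𝓕; (ii) there are sets F₁, …, F_k ∈ 𝓕 (not necessarily distinct), where k is odd, whose symmetric difference F₁ + ⋯ + F_k is empty. -/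
open Relation

/-!
Identify a set with its indicator vector in `𝔽₂^E`. Then (i) asks for a linear functional equal
to `1` on the indicator vectors of the members of `𝓕`, and (ii) for an odd number of these vectors
summing to `0`; applying the functional to such a sum gives `1 = 0`, so (i) and (ii) exclude each
other. If (ii) fails, `(0, 1)` is not in the span of the vectors `(1_F, 1)` in `𝔽₂^E × 𝔽₂`, and a
functional separating it from that span yields (i).
-/

theorem exists_dual_eq_one_or_mem_span {K V : Type*} [Field K] [AddCommGroup V] [Module K V]
    (S : Set V) :
    (∃ φ : Module.Dual K V, ∀ v ∈ S, φ v = 1) ∨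
      ((0 : V), (1 : K)) ∈ Submodule.span K ((fun v ↦ (v, (1 : K))) '' S) := by
  refine or_iff_not_imp_right.2 fun hspan ↦ ?_
  obtain ⟨ψ, hψ, hψspan⟩ := Submodule.exists_dual_map_eq_bot_of_notMem hspan inferInstance
  -- `ψ` vanishes on every `(v, 1)` with `v ∈ S`, so `v ↦ -ψ (v, 0) / ψ (0, 1)` is `1` on `S`.
  refine ⟨-(ψ (0, 1))⁻¹ • ψ.comp (LinearMap.inl K V K), fun v hv ↦ ?_⟩
  have hv1 : ψ (v, 1) = 0 := by
    have := Submodule.mem_map_of_mem (f := ψ)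
      (Submodule.subset_span (R := K) (Set.mem_image_of_mem (fun v ↦ (v, (1 : K))) hv))
    rwa [hψspan, Submodule.mem_bot] at this
  have hv0 : ψ (v, 0) = -ψ (0, 1) := by
    rw [eq_neg_iff_add_eq_zero, ← map_add, Prod.mk_add_mk, add_zero, zero_add, hv1]
  simp only [LinearMap.smul_apply, LinearMap.comp_apply, LinearMap.inl_apply, smul_eq_mul]
  rw [hv0, neg_mul_neg, inv_mul_cancel₀ hψ]

theorem exists_fin_sum_of_mem_span_zmod_two {M : Type*} [AddCommGroup M] [Module (ZMod 2) M]
    {s : Set M} {x : M} (hx : x ∈ Submodule.span (ZMod 2) s) :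
    ∃ (k : ℕ) (g : Fin k → M), (∀ i, g i ∈ s) ∧ ∑ i, g i = x := by
  induction hx using Submodule.span_induction with
  | mem x hx => exact ⟨1, fun _ ↦ x, fun _ ↦ hx, by simp⟩
  | zero => exact ⟨0, Fin.elim0, fun i ↦ i.elim0, by simp⟩
  | add x y _ _ hx hy =>
    obtain ⟨k, g, hg, rfl⟩ := hx
    obtain ⟨l, g', hg', rfl⟩ := hy
    exact ⟨k + l, Fin.append g g', Fin.addCases (by simpa using hg) (by simpa using hg'),
      by simp [Fin.sum_univ_add]⟩
  | smul c x _ hx =>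
    obtain rfl | rfl := (by decide : ∀ c : ZMod 2, c = 0 ∨ c = 1) c
    · exact ⟨0, Fin.elim0, fun i ↦ i.elim0, by simp⟩
    · rwa [one_smul]

theorem xor_exists_dual_eq_one_exists_odd_sum_eq_zero {V : Type*} [AddCommGroup V]
    [Module (ZMod 2) V] (S : Set V) :
    Xor (∃ φ : Module.Dual (ZMod 2) V, ∀ v ∈ S, φ v = 1)
      (∃ (k : ℕ) (g : Fin k → V), Odd k ∧ (∀ i, g i ∈ S) ∧ ∑ i, g i = 0) := by
  rw [xor_iff_or_and_not_and]
  constructor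
  · refine (exists_dual_eq_one_or_mem_span S).imp_right fun h ↦ ?_
    obtain ⟨k, g, hg, hsum⟩ := exists_fin_sum_of_mem_span_zmod_two h
    choose v hvS hv using hg
    have hsum' : ∑ i, ((v i, 1) : V × ZMod 2) = (0, 1) := by simpa only [hv] using hsum
    rw [Prod.ext_iff, Prod.fst_sum, Prod.snd_sum] at hsum'
    refine ⟨k, v, ?_, hvS, hsum'.1⟩
    simpa [ZMod.natCast_eq_one_iff_odd] using hsum'.2
  · rintro ⟨⟨φ, hφ⟩, k, g, hk, hg, hsum⟩
    have hφsum : φ (∑ i, g i) = k := by simp [hφ _ (hg _)]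
    rw [hsum, map_zero, eq_comm, ZMod.natCast_eq_zero_iff_even] at hφsum
    exact Nat.not_even_iff_odd.mpr hk hφsum

section

variable {α : Type}

theorem sum_eindicator [Fintype α] (S : Set α) : ∑ a, eindicator S a = S.ncard := by
  classical
  simp [eindicator, Set.indicator_apply, Finset.sum_boole, Set.ncard_eq_toFinset_card']

theorem eindicator_dotProduct_eindicator [Fintype α] (F J : Set α) :
    eindicator F ⬝ᵥ eindicator J = (F ∩ J).ncard := by
  simp only [← sum_eindicator, eindicator, Set.inter_indicator_one, dotProduct, Pi.mul_apply]

theorem eindicator_setOf_ne_zero (w : α → ZMod 2) : eindicator {a | w a ≠ 0} = w := by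
  funext a
  obtain h | h := (by decide : ∀ c : ZMod 2, c = 0 ∨ c = 1) (w a) <;> simp [eindicator, h]

theorem eindicator_eq_zero_iff (S : Set α) : eindicator S = 0 ↔ S = ∅ := by
  simp [funext_iff, eindicator, Set.eq_empty_iff_forall_notMem]

theorem eindicator_symmDiffFam {k : ℕ} (F : Fin k → Set α) :
    eindicator (symmDiffFam F) = ∑ i, eindicator (F i) := by
  funext a
  have hsum : ∑ i, eindicator (F i) a = ({i | a ∈ F i} : Set (Fin k)).ncard := by
    rw [← sum_eindicator]
    rfl
  rw [Finset.sum_apply, hsum]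
  obtain h | h := Nat.even_or_odd ({i | a ∈ F i} : Set (Fin k)).ncard
  · rw [h.natCast_zmod_two, eindicator, Set.indicator_of_notMem]
    exact Nat.not_odd_iff_even.mpr h
  · rw [h.natCast_zmod_two, eindicator, Set.indicator_of_mem (show a ∈ symmDiffFam F from h),
      Pi.one_apply]

theorem exists_odd_inter_ncard_iff_exists_dual [Fintype α] (𝓕 : Set (Set α)) :
    (∃ J : Set α, ∀ F ∈ 𝓕, Odd (F ∩ J).ncard) ↔
      ∃ φ : Module.Dual (ZMod 2) (α → ZMod 2), ∀ v ∈ eindicator '' 𝓕, φ v = 1 := by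
  classical
  simp only [Set.forall_mem_image]
  constructor
  · rintro ⟨J, hJ⟩
    refine ⟨dotProductEquiv (ZMod 2) α (eindicator J), fun F hF ↦ ?_⟩
    rw [dotProductEquiv_apply_apply, dotProduct_comm, eindicator_dotProduct_eindicator,
      ZMod.natCast_eq_one_iff_odd]
    exact hJ F hF
  · rintro ⟨φ, hφ⟩
    obtain ⟨w, rfl⟩ := (dotProductEquiv (ZMod 2) α).surjective φ
    refine ⟨{a | w a ≠ 0}, fun F hF ↦ ?_⟩
    have := hφ hF
    rwa [dotProductEquiv_apply_apply, ← eindicator_setOf_ne_zero w, dotProduct_comm,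
      eindicator_dotProduct_eindicator, ZMod.natCast_eq_one_iff_odd] at this

theorem exists_odd_symmDiffFam_eq_empty_iff (𝓕 : Set (Set α)) :
    (∃ (k : ℕ) (F : Fin k → Set α), Odd k ∧ (∀ i, F i ∈ 𝓕) ∧ symmDiffFam F = ∅) ↔
      ∃ (k : ℕ) (g : Fin k → α → ZMod 2), Odd k ∧ (∀ i, g i ∈ eindicator '' 𝓕) ∧ ∑ i, g i = 0 := by
  constructor
  · rintro ⟨k, F, hk, hF, hempty⟩
    refine ⟨k, fun i ↦ eindicator (F i), hk, fun i ↦ ⟨F i, hF i, rfl⟩, ?_⟩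
    rw [← eindicator_symmDiffFam, hempty, eindicator_eq_zero_iff]
  · rintro ⟨k, g, hk, hg, hsum⟩
    choose F hF hFg using hg
    refine ⟨k, F, hk, hF, ?_⟩
    rw [← eindicator_eq_zero_iff, eindicator_symmDiffFam]
    simpa only [hFg] using hsum

end

theorem stmt9 {E : Type} [Fintype E] (𝓕 : Set (Set E)) :
    Xor' (∃ J : Set E, ∀ F ∈ 𝓕, Odd (F ∩ J).ncard)
      (∃ (k : ℕ) (F : Fin k → Set E), Odd k ∧ (∀ i, F i ∈ 𝓕) ∧ symmDiffFam F = ∅) := by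
  rw [exists_odd_inter_ncard_iff_exists_dual, exists_odd_symmDiffFam_eq_empty_iff]
  exact xor_exists_dual_eq_one_exists_odd_sum_eq_zero _
end
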